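/- arXiv:math/0604120 — 5 statements merged into one kernel-verified Lean document; each statement's English description precedes it below -/
import Mathlib

section
/- If α, β ∈ ℝⁿ satisfy α ≺ β (i.e., for each k, the sum of the k largest entries of α is at most that of β, with equality for k = n), then there exists a Hermitian matrix A ∈ Mₙ(ℂ) whose diagonal is α and whose eigenvalues (with multiplicity) are β. -/
/-- The sum of the `k` largest entries of `α`: the supremum of the sums of `α`
over subsets of cardinality `k`. -/
noncomputable def kLargestSum {n : ℕ} (α : Fin n → ℝ) (k : ℕ) : ℝ :=
  sSup {x : ℝ | ∃ s : Finset (Fin n), s.card = k ∧ x = ∑ i ∈ s, α i}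

/-- Vector majorization `α ≺ β`: for each `k` the sum of the `k` largest entries of
`α` is at most that of `β`, with equality of the total sums. -/
def IsMajorizedBy {n : ℕ} (α β : Fin n → ℝ) : Prop :=
  (∀ k : ℕ, k ≤ n → kLargestSum α k ≤ kLargestSum β k) ∧ ∑ i, α i = ∑ i, β i

/-! Sort `α` and `β` decreasingly. If `α₁ ≤ βₙ`, majorization forces `α = β`. Otherwise pick `k`
with `βₖ ≥ α₁ > βₖ₊₁`; a rotation in the `(k, k+1)`-plane conjugates `diag β` into a matrix with
`α₁` at the pivot whose complementary principal block is diagonal, with `βₖ, βₖ₊₁` replaced by the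
single entry `βₖ + βₖ₊₁ - α₁`. The remaining entries of `α` are majorized by these, so induction
gives an orthogonal conjugation of that block with diagonal `(α₂, …, αₙ)`. The construction is
real; its complexification is Hermitian with the characteristic polynomial of `diag β`. -/

open Finset Function Matrix Polynomial

theorem Finset.sum_le_sum_of_card_eq {ι : Type*} [DecidableEq ι] {s t : Finset ι} {f : ι → ℝ}
    (hst : #s = #t) (h : ∀ x ∈ s \ t, ∀ y ∈ t \ s, f x ≤ f y) :
    ∑ x ∈ s, f x ≤ ∑ x ∈ t, f x := by
  have hsdiff : ∑ x ∈ s \ t, f x ≤ ∑ x ∈ t \ s, f x := by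
    obtain he | hne := (s \ t).eq_empty_or_nonempty
    · have : t \ s = ∅ := by rw [← card_eq_zero, ← card_sdiff_comm hst, he, card_empty]
      simp [he, this]
    · obtain ⟨x₀, hx₀, hmax⟩ := exists_max_image (s \ t) f hne
      calc ∑ x ∈ s \ t, f x ≤ #(s \ t) • f x₀ := sum_le_card_nsmul _ _ _ hmax
        _ = #(t \ s) • f x₀ := by rw [card_sdiff_comm hst]
        _ ≤ ∑ x ∈ t \ s, f x := card_nsmul_le_sum _ _ _ (h x₀ hx₀)
  rw [← sum_inter_add_sum_sdiff s t, ← sum_inter_add_sum_sdiff t s, inter_comm]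
  gcongr

theorem Antitone.sum_le_sum_filter_val_lt {n : ℕ} {f : Fin n → ℝ} (hf : Antitone f)
    {s : Finset (Fin n)} (hs : #s ≤ n) : ∑ i ∈ s, f i ≤ ∑ i ∈ {i : Fin n | (i : ℕ) < #s}, f i := by
  refine sum_le_sum_of_card_eq (by rw [Fin.card_filter_val_lt, min_eq_right hs]) ?_
  simp only [mem_sdiff, mem_filter, mem_univ, true_and, not_lt, and_imp]
  exact fun x _ hx y hy _ => hf (by omega)

theorem exists_antitone_perm {n : ℕ} (f : Fin n → ℝ) : ∃ σ : Equiv.Perm (Fin n), Antitone (f ∘ σ) :=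
  ⟨Tuple.sort (-f), fun _ _ hij => by simpa using Tuple.monotone_sort (-f) hij⟩

theorem exists_perm_comp_eq_of_map_eq {ι α : Type*} [Fintype ι] [DecidableEq α] {f g : ι → α}
    (h : univ.val.map f = univ.val.map g) : ∃ σ : Equiv.Perm ι, f ∘ σ = g := by
  have hfiber (c : α) : Fintype.card {i // g i = c} = Fintype.card {i // f i = c} := by
    have hcount (f : ι → α) : Fintype.card {i // f i = c} = (univ.val.map f).count c := by
      simp [Fintype.card_subtype, Multiset.count_map, eq_comm, Finset.card_def]
    rw [hcount, hcount, h]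
  exact ⟨Equiv.ofFiberEquiv fun c => Fintype.equivOfCardEq (hfiber c),
    funext (Equiv.ofFiberEquiv_map _)⟩

section kLargestSum

variable {n : ℕ}

theorem bddAbove_kLargestSum_set (α : Fin n → ℝ) (k : ℕ) :
    BddAbove {x : ℝ | ∃ s : Finset (Fin n), #s = k ∧ x = ∑ i ∈ s, α i} :=
  ((Set.finite_range fun s : Finset (Fin n) => ∑ i ∈ s, α i).subset
    (by rintro _ ⟨s, -, rfl⟩; exact ⟨s, rfl⟩)).bddAbove

theorem sum_le_kLargestSum (α : Fin n → ℝ) (s : Finset (Fin n)) :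
    ∑ i ∈ s, α i ≤ kLargestSum α #s :=
  le_csSup (bddAbove_kLargestSum_set α _) ⟨s, rfl, rfl⟩

theorem kLargestSum_le {α : Fin n → ℝ} {k : ℕ} {c : ℝ} (hk : k ≤ n)
    (h : ∀ s : Finset (Fin n), #s = k → ∑ i ∈ s, α i ≤ c) : kLargestSum α k ≤ c := by
  obtain ⟨s, -, hs⟩ := exists_subset_card_eq (s := (univ : Finset (Fin n))) (by simpa using hk)
  exact csSup_le ⟨_, s, hs, rfl⟩ (by rintro _ ⟨s, hs, rfl⟩; exact h s hs)

theorem Antitone.kLargestSum_le_sum_val_lt {α : Fin n → ℝ} (hα : Antitone α) {k : ℕ}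
    (hk : k ≤ n) : kLargestSum α k ≤ ∑ i ∈ {i : Fin n | (i : ℕ) < k}, α i :=
  kLargestSum_le hk fun s hs => by subst hs; exact hα.sum_le_sum_filter_val_lt hk

theorem kLargestSum_comp_perm (α : Fin n → ℝ) (σ : Equiv.Perm (Fin n)) (k : ℕ) :
    kLargestSum (α ∘ σ) k = kLargestSum α k := by
  unfold kLargestSum
  congr 1
  ext x
  constructor
  · rintro ⟨s, rfl, rfl⟩
    exact ⟨s.map σ.toEmbedding, card_map _, by simp⟩
  · rintro ⟨s, rfl, rfl⟩
    exact ⟨s.map σ.symm.toEmbedding, card_map _, by simp⟩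

theorem IsMajorizedBy.comp_perm {α β : Fin n → ℝ} (h : IsMajorizedBy α β)
    (σ τ : Equiv.Perm (Fin n)) : IsMajorizedBy (α ∘ σ) (β ∘ τ) := by
  simpa only [IsMajorizedBy, kLargestSum_comp_perm, Function.comp_apply, Equiv.sum_comp] using h

theorem sum_val_lt_le_kLargestSum (α : Fin n → ℝ) {m : ℕ} (hm : m ≤ n) :
    ∑ i ∈ {i : Fin n | (i : ℕ) < m}, α i ≤ kLargestSum α m := by
  simpa [Fin.card_filter_val_lt, hm] using sum_le_kLargestSum α {i : Fin n | (i : ℕ) < m}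

theorem sum_val_lt_update_succAbove (b : Fin (n + 1) → ℝ) {k : Fin n} (c : ℝ) {m : ℕ}
    (hkm : (k : ℕ) < m) :
    ∑ i ∈ {i : Fin n | (i : ℕ) < m}, update (b ∘ k.castSucc.succAbove) k c i =
      ∑ j ∈ {j : Fin (n + 1) | (j : ℕ) < m + 1}, b j - b k.castSucc - b k.succ + c := by
  have hval (i : Fin n) : (k.castSucc.succAbove i : ℕ) < m + 1 ↔ (i : ℕ) < m := by
    rcases lt_or_ge i k with hi | hi
    · rw [Fin.succAbove_of_castSucc_lt _ _ (Fin.castSucc_lt_castSucc_iff.2 hi)]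
      simp only [Fin.val_castSucc]
      omega
    · rw [Fin.succAbove_of_le_castSucc _ _ (Fin.castSucc_le_castSucc_iff.2 hi)]
      simp
  have hsplit : ∑ j ∈ {j : Fin (n + 1) | (j : ℕ) < m + 1}, b j =
      b k.castSucc + ∑ i ∈ {i : Fin n | (i : ℕ) < m}, b (k.castSucc.succAbove i) := by
    rw [sum_filter, sum_filter, Fin.sum_univ_succAbove _ k.castSucc]
    simp only [Fin.val_castSucc, show (k : ℕ) < m + 1 by omega, if_true, hval]
  have hk : k ∈ ({i : Fin n | (i : ℕ) < m} : Finset (Fin n)) := by simpa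
  rw [Finset.sum_update_of_mem hk, hsplit, sum_eq_add_sum_sdiff_singleton_of_mem hk]
  simp only [Function.comp_apply, Fin.succAbove_castSucc_self]
  ring

theorem IsMajorizedBy.peel {a b : Fin (n + 1) → ℝ} (ha : Antitone a) (hb : Antitone b)
    (h : IsMajorizedBy a b) {k : Fin n} (hk : a 0 ≤ b k.castSucc) :
    IsMajorizedBy (a ∘ Fin.succ)
      (update (b ∘ k.castSucc.succAbove) k (b k.castSucc + b k.succ - a 0)) := by
  set b' := update (b ∘ k.castSucc.succAbove) k (b k.castSucc + b k.succ - a 0)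
  have hb'_of_lt (i : Fin n) (hi : i < k) : b' i = b i.castSucc := by
    simp [b', hi.ne, Fin.succAbove_of_castSucc_lt _ _ (Fin.castSucc_lt_castSucc_iff.2 hi)]
  constructor
  · intro m hm
    refine kLargestSum_le hm fun s hs => ?_
    rcases le_or_gt m k with hmk | hkm
    · calc ∑ i ∈ s, (a ∘ Fin.succ) i ≤ #s • a 0 :=
            sum_le_card_nsmul _ _ _ fun i _ => ha (Fin.zero_le _)
        _ = #{i : Fin n | (i : ℕ) < m} • a 0 := by
            rw [Fin.card_filter_val_lt, hs, min_eq_right hm]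
        _ ≤ ∑ i ∈ {i : Fin n | (i : ℕ) < m}, b' i := by
            refine card_nsmul_le_sum _ _ _ fun i hi => ?_
            have hik : i < k := by
              rw [mem_filter] at hi
              exact Fin.lt_def.2 (by omega)
            rw [hb'_of_lt i hik]
            exact hk.trans (hb (Fin.castSucc_le_castSucc_iff.2 hik.le))
        _ ≤ kLargestSum b' m := sum_val_lt_le_kLargestSum b' hm
    · set s' := cons 0 (s.map (Fin.succEmb n)) (by simp)
      calc ∑ i ∈ s, (a ∘ Fin.succ) i = ∑ j ∈ s', a j - a 0 := by simp [s']
        _ ≤ kLargestSum a (m + 1) - a 0 := by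
            gcongr
            simpa [s', hs] using sum_le_kLargestSum a s'
        _ ≤ kLargestSum b (m + 1) - a 0 := by
            gcongr
            exact h.1 _ (by omega)
        _ ≤ ∑ j ∈ {j : Fin (n + 1) | (j : ℕ) < m + 1}, b j - a 0 := by
            gcongr
            exact hb.kLargestSum_le_sum_val_lt (by omega)
        _ = ∑ i ∈ {i : Fin n | (i : ℕ) < m}, b' i := by
            rw [sum_val_lt_update_succAbove b _ hkm]
            ring
        _ ≤ kLargestSum b' m := sum_val_lt_le_kLargestSum b' hm
  · have hb'_sum : ∑ i, b' i = ∑ j, b j - a 0 := by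
      have := sum_val_lt_update_succAbove b (b k.castSucc + b k.succ - a 0) k.isLt
      simp only [Fin.is_lt, filter_true] at this
      exact this.trans (by ring)
    rw [hb'_sum, ← h.2, Fin.sum_univ_succ]
    simp

end kLargestSum

section OrthoConj

variable {ι κ : Type*} [Fintype ι] [DecidableEq ι] [Fintype κ] [DecidableEq κ]

def IsDiagOfOrthoConj (a b : ι → ℝ) : Prop :=
  ∃ U : Matrix ι ι ℝ, U * Uᵀ = 1 ∧ (U * diagonal b * Uᵀ).diag = a

theorem IsDiagOfOrthoConj.refl (b : ι → ℝ) : IsDiagOfOrthoConj b b :=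
  ⟨1, by simp, by simp⟩

theorem IsDiagOfOrthoConj.comp_equiv {a b : κ → ℝ} (h : IsDiagOfOrthoConj a b) (e₁ e₂ : ι ≃ κ) :
    IsDiagOfOrthoConj (a ∘ e₁) (b ∘ e₂) := by
  obtain ⟨U, hU, hdiag⟩ := h
  refine ⟨U.submatrix e₁ e₂, ?_, ?_⟩
  · rw [transpose_submatrix, submatrix_mul_equiv, hU, submatrix_one_equiv]
  · rw [← submatrix_diagonal_equiv, transpose_submatrix, submatrix_mul_equiv,
      submatrix_mul_equiv, ← hdiag]
    rfl

def givens (j : κ) (c s : ℝ) : Matrix (κ ⊕ Unit) (κ ⊕ Unit) ℝ :=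
  fromBlocks (diagonal (update 1 j c)) (replicateCol Unit (Pi.single j (-s)))
    (replicateRow Unit (Pi.single j s)) (of fun _ _ => c)

theorem givens_mul_transpose (j : κ) {c s : ℝ} (h : c ^ 2 + s ^ 2 = 1) :
    givens j c s * (givens j c s)ᵀ = 1 := by
  ext (x | x) (y | y) <;>
    simp [givens, mul_apply, diagonal_apply, Pi.single_apply, update_apply, one_apply]
  · split_ifs <;> simp_all; linear_combination h
  · split_ifs <;> ring
  · split_ifs <;> ring
  · linear_combination h

theorem toBlocks₁₁_givens_conj (j : κ) (c s : ℝ) (b₀ : κ → ℝ) (p : ℝ) :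
    (givens j c s * diagonal (Sum.elim b₀ fun _ : Unit => p) * (givens j c s)ᵀ).toBlocks₁₁ =
      diagonal (update b₀ j (c ^ 2 * b₀ j + s ^ 2 * p)) := by
  ext x y
  simp [givens, toBlocks₁₁, mul_apply, diagonal_apply, Pi.single_apply, update_apply]
  split_ifs <;> simp_all; ring

theorem toBlocks₂₂_givens_conj (j : κ) (c s : ℝ) (b₀ : κ → ℝ) (p : ℝ) :
    (givens j c s * diagonal (Sum.elim b₀ fun _ : Unit => p) * (givens j c s)ᵀ).toBlocks₂₂ =
      of fun _ _ => s ^ 2 * b₀ j + c ^ 2 * p := by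
  ext
  simp [givens, toBlocks₂₂, mul_apply, diagonal_apply, Pi.single_apply]
  ring

theorem exists_sq_weights_of_le_of_le {p q t : ℝ} (hq : q ≤ t) (hp : t ≤ p) :
    ∃ c s : ℝ, c ^ 2 + s ^ 2 = 1 ∧ s ^ 2 * q + c ^ 2 * p = t := by
  obtain rfl | hqp := (hq.trans hp).eq_or_lt
  · exact ⟨1, 0, by norm_num, by linarith [le_antisymm hq hp]⟩
  have hpq : p - q ≠ 0 := sub_ne_zero.2 hqp.ne'
  refine ⟨√((t - q) / (p - q)), √((p - t) / (p - q)), ?_, ?_⟩ <;>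
    rw [Real.sq_sqrt (div_nonneg (by linarith) (by linarith)),
      Real.sq_sqrt (div_nonneg (by linarith) (by linarith))] <;>
    field_simp <;> ring

theorem IsDiagOfOrthoConj.peel {a' b₀ : κ → ℝ} {j : κ} {p q t : ℝ} (hj : b₀ j = q)
    (hq : q ≤ t) (hp : t ≤ p) (h : IsDiagOfOrthoConj a' (update b₀ j (p + q - t))) :
    IsDiagOfOrthoConj (Sum.elim a' fun _ : Unit => t) (Sum.elim b₀ fun _ : Unit => p) := by
  obtain ⟨c, s, hcs, hct⟩ := exists_sq_weights_of_le_of_le hq hp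
  obtain ⟨V, hV, hdiag⟩ := h
  set M := givens j c s * diagonal (Sum.elim b₀ fun _ : Unit => p) * (givens j c s)ᵀ
  have hM₁₁ : M.toBlocks₁₁ = diagonal (update b₀ j (p + q - t)) := by
    rw [toBlocks₁₁_givens_conj, hj]
    congr 2
    linear_combination (p + q) * hcs - hct
  have hM₂₂ : M.toBlocks₂₂ = of fun _ _ => t := by
    rw [toBlocks₂₂_givens_conj, hj, hct]
  refine ⟨fromBlocks V 0 0 1 * givens j c s, ?_, ?_⟩
  · rw [transpose_mul, Matrix.mul_assoc, ← Matrix.mul_assoc (givens j c s),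
      givens_mul_transpose j hcs, Matrix.one_mul]
    simp [fromBlocks_transpose, fromBlocks_multiply, hV]
  · have : fromBlocks V 0 0 1 * givens j c s * diagonal (Sum.elim b₀ fun _ : Unit => p) *
        (fromBlocks V 0 0 1 * givens j c s)ᵀ = fromBlocks V 0 0 1 * M * (fromBlocks V 0 0 1)ᵀ := by
      simp only [M, transpose_mul, Matrix.mul_assoc]
    rw [this, ← fromBlocks_toBlocks M, hM₁₁, hM₂₂]
    ext (x | x) <;> simp [fromBlocks_transpose, fromBlocks_multiply, ← hdiag]

end OrthoConj

theorem Sum.elim_comp_succAbove_comp_finSuccEquiv' {n : ℕ} {α : Type*} (f : Fin (n + 1) → α)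
    (i : Fin (n + 1)) :
    Sum.elim (f ∘ i.succAbove) (fun _ : Unit => f i) ∘
      ((finSuccEquiv' i).trans (Equiv.optionEquivSumPUnit (Fin n))) = f := by
  funext j
  cases j using Fin.succAboveCases i <;> simp

theorem IsDiagOfOrthoConj.of_antitone {n : ℕ} {a b : Fin (n + 1) → ℝ} (ha : Antitone a)
    (hb : Antitone b) (h : IsMajorizedBy a b)
    (ih : ∀ a' b' : Fin n → ℝ, IsMajorizedBy a' b' → IsDiagOfOrthoConj a' b') :
    IsDiagOfOrthoConj a b := by
  by_cases hlast : a 0 ≤ b (Fin.last n)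
  · have hle (i : Fin (n + 1)) : a i ≤ b i :=
      (ha (Fin.zero_le i)).trans (hlast.trans (hb (Fin.le_last i)))
    obtain rfl : a = b :=
      funext fun i => (sum_eq_sum_iff_of_le fun i _ => hle i).1 h.2 i (mem_univ i)
    exact .refl a
  have h0 : a 0 ≤ b 0 :=
    calc a 0 ≤ kLargestSum a 1 := by simpa using sum_le_kLargestSum a {0}
      _ ≤ kLargestSum b 1 := h.1 1 (by omega)
      _ ≤ b 0 := kLargestSum_le (by omega) fun s hs => by
        obtain ⟨x, rfl⟩ := card_eq_one.1 hs
        simpa using hb (Fin.zero_le x)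
  obtain ⟨k, hk, hk'⟩ : ∃ k : Fin n, a 0 ≤ b k.castSucc ∧ b k.succ < a 0 := by
    by_contra! hcon
    exact hlast (Fin.induction h0 hcon (Fin.last n))
  have hpeel := (ih _ _ (h.peel ha hb hk)).peel (by simp) hk'.le hk
  -- reindex so that the pivots `0` of `a` and `k.castSucc` of `b` become the `Unit` coordinate
  have := hpeel.comp_equiv ((finSuccEquiv' 0).trans (Equiv.optionEquivSumPUnit (Fin n)))
    ((finSuccEquiv' k.castSucc).trans (Equiv.optionEquivSumPUnit (Fin n)))
  rwa [← Fin.succAbove_zero, Sum.elim_comp_succAbove_comp_finSuccEquiv',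
    Sum.elim_comp_succAbove_comp_finSuccEquiv'] at this

theorem IsMajorizedBy.isDiagOfOrthoConj :
    ∀ {n : ℕ} {a b : Fin n → ℝ}, IsMajorizedBy a b → IsDiagOfOrthoConj a b
  | 0, _, _, _ => ⟨1, by simp, Subsingleton.elim _ _⟩
  | _ + 1, a, b, h => by
    obtain ⟨σ, hσ⟩ := exists_antitone_perm a
    obtain ⟨τ, hτ⟩ := exists_antitone_perm b
    have := (IsDiagOfOrthoConj.of_antitone hσ hτ (h.comp_perm σ τ)
      fun _ _ => IsMajorizedBy.isDiagOfOrthoConj).comp_equiv σ.symm τ.symm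
    simpa [Function.comp_assoc] using this

theorem Matrix.IsHermitian.exists_perm_eigenvalues_eq {ι : Type*} [Fintype ι] [DecidableEq ι]
    {A : Matrix ι ι ℂ} (hA : A.IsHermitian) {b : ι → ℝ}
    (h : A.charpoly = ∏ i, (X - C (b i : ℂ))) : ∃ σ : Equiv.Perm ι, hA.eigenvalues ∘ σ = b := by
  have hroots : univ.val.map (RCLike.ofReal ∘ hA.eigenvalues : ι → ℂ) =
      univ.val.map (fun i => (b i : ℂ)) := by
    rw [← hA.roots_charpoly_eq_eigenvalues, h,
      roots_prod _ _ (by simp [prod_ne_zero_iff, X_sub_C_ne_zero])]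
    simp
  refine exists_perm_comp_eq_of_map_eq (Multiset.map_injective Complex.ofReal_injective ?_)
  simpa [Multiset.map_map] using hroots

/-- **Horn's theorem** (1954): if `α ≺ β` then there is a Hermitian matrix with
diagonal `α` and eigenvalues (with multiplicity) `β`. -/
theorem horn_theorem {n : ℕ} (α β : Fin n → ℝ) (h : IsMajorizedBy α β) :
    ∃ (A : Matrix (Fin n) (Fin n) ℂ) (hA : A.IsHermitian),
      (∀ i, A i i = (α i : ℂ)) ∧ ∃ σ : Equiv.Perm (Fin n), hA.eigenvalues ∘ σ = β := by
  obtain ⟨U, hU, hdiag⟩ := h.isDiagOfOrthoConj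
  set M := U * diagonal β * Uᵀ
  have hM : Mᵀ = M := by simp [M, Matrix.mul_assoc]
  have hA : (M.map Complex.ofRealHom).IsHermitian := by
    ext i j
    simpa using congrFun₂ hM i j
  have hcharpoly : (M.map Complex.ofRealHom).charpoly = ∏ i, (X - C (β i : ℂ)) := by
    have hMchar : M.charpoly = (diagonal β).charpoly := by
      simp only [M]
      rw [Matrix.mul_assoc U, charpoly_mul_comm, Matrix.mul_assoc, mul_eq_one_comm.1 hU,
        Matrix.mul_one]
    rw [charpoly_map, hMchar, charpoly_diagonal, Polynomial.map_prod]
    simp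
  exact ⟨_, hA, fun i => by simp [← hdiag], hA.exists_perm_eigenvalues_eq hcharpoly⟩
end

section
/- For Hermitian matrices and the diagonal subalgebra 𝒟 ⊂ Mₙ(ℂ): the set E_𝒟({U M_β U* : U unitary}) equals {M_α : α ≺ β}, where E_𝒟 is the projection onto the diagonal and M_α is the diagonal matrix with diagonal α. -/
open Finset Matrix

namespace SH

variable {n : ℕ}

/-- the canonical "first k" finset -/
def lowSet {n : ℕ} (k : ℕ) (h : k ≤ n) : Finset (Fin n) :=
  (Finset.range k).attachFin (fun m hm => lt_of_lt_of_le (Finset.mem_range.mp hm) h)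

lemma kSet_finite (α : Fin n → ℝ) (k : ℕ) :
    {x : ℝ | ∃ s : Finset (Fin n), s.card = k ∧ x = ∑ i ∈ s, α i}.Finite := by
  have : {x : ℝ | ∃ s : Finset (Fin n), s.card = k ∧ x = ∑ i ∈ s, α i} ⊆
      (fun s : Finset (Fin n) => ∑ i ∈ s, α i) '' Set.univ := by
    rintro x ⟨s, _, rfl⟩; exact ⟨s, trivial, rfl⟩
  exact (Set.finite_univ.image _).subset this

lemma kSet_bddAbove (α : Fin n → ℝ) (k : ℕ) :
    BddAbove {x : ℝ | ∃ s : Finset (Fin n), s.card = k ∧ x = ∑ i ∈ s, α i} :=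
  (kSet_finite α k).bddAbove

lemma mem_lowSet {k : ℕ} (h : k ≤ n) (i : Fin n) : i ∈ lowSet k h ↔ (i : ℕ) < k := by
  simp [lowSet, Finset.mem_attachFin]

lemma card_lowSet {k : ℕ} (h : k ≤ n) : (lowSet k h).card = k := by
  simp [lowSet, Finset.card_attachFin]

lemma sum_le_kLargestSum (α : Fin n → ℝ) {k : ℕ} (s : Finset (Fin n)) (hs : s.card = k) :
    ∑ i ∈ s, α i ≤ kLargestSum α k :=
  le_csSup (kSet_bddAbove α k) ⟨s, hs, rfl⟩

lemma kLargestSum_le (α : Fin n → ℝ) {k : ℕ} (hk : k ≤ n) {a : ℝ}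
    (h : ∀ s : Finset (Fin n), s.card = k → ∑ i ∈ s, α i ≤ a) : kLargestSum α k ≤ a := by
  refine csSup_le ⟨∑ i ∈ lowSet k hk, α i, ⟨lowSet k hk, card_lowSet hk, rfl⟩⟩ ?_
  rintro x ⟨s, hs, rfl⟩; exact h s hs

lemma strictMono_fin_le {k : ℕ} {f : Fin k → Fin n} (hf : StrictMono f) (i : Fin k) :
    (i : ℕ) ≤ (f i : ℕ) := by
  obtain ⟨v, hv⟩ := i
  induction v with
  | zero => exact Nat.zero_le _
  | succ m ih =>
      have hm : m < k := Nat.lt_of_succ_lt hv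
      have h1 : (f ⟨m, hm⟩ : ℕ) < (f ⟨m + 1, hv⟩ : ℕ) := hf (by simp [Fin.lt_def])
      have h2 := ih hm
      simp only [Fin.val_mk] at h1 h2 ⊢
      omega

/-- any k-subset sum of an antitone vector is at most the first-k sum -/
lemma sum_le_lowSet_of_antitone {α : Fin n → ℝ} (hα : Antitone α) {k : ℕ} (hk : k ≤ n)
    (s : Finset (Fin n)) (hs : s.card = k) :
    ∑ i ∈ s, α i ≤ ∑ i ∈ lowSet k hk, α i := by
  have e := s.orderIsoOfFin hs
  have h1 : ∑ i ∈ s, α i = ∑ i : Fin k, α (e i) := by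
    rw [← Finset.sum_coe_sort s]
    exact (Equiv.sum_comp e.toEquiv (fun x : s => α x)).symm
  have hls : lowSet k hk = Finset.image (Fin.castLE hk) Finset.univ := by
    ext i
    simp only [mem_lowSet, Finset.mem_image, Finset.mem_univ, true_and]
    constructor
    · intro hi; exact ⟨⟨(i : ℕ), hi⟩, by simp [Fin.ext_iff]⟩
    · rintro ⟨a, rfl⟩; simpa using a.isLt
  have h2 : ∑ i ∈ lowSet k hk, α i = ∑ i : Fin k, α (Fin.castLE hk i) := by
    rw [hls, Finset.sum_image (fun a _ b _ h => (Fin.castLE_injective hk) h)]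
  rw [h1, h2]
  apply Finset.sum_le_sum
  intro i _
  apply hα
  have hsm : StrictMono (fun i : Fin k => ((e i : Fin n))) := by
    intro a b hab
    exact Subtype.coe_lt_coe.mpr (e.strictMono hab)
  have := strictMono_fin_le hsm i
  exact Fin.le_def.mpr (by simpa using this)

lemma kLargestSum_antitone {α : Fin n → ℝ} (hα : Antitone α) {k : ℕ} (hk : k ≤ n) :
    kLargestSum α k = ∑ i ∈ lowSet k hk, α i :=
  le_antisymm (kLargestSum_le α hk (fun s hs => sum_le_lowSet_of_antitone hα hk s hs))
    (sum_le_kLargestSum α _ (card_lowSet hk))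

lemma kLargestSum_comp_perm (α : Fin n → ℝ) (σ : Equiv.Perm (Fin n)) (k : ℕ) :
    kLargestSum (α ∘ σ) k = kLargestSum α k := by
  unfold kLargestSum
  congr 1
  ext x
  constructor
  · rintro ⟨s, hs, rfl⟩
    refine ⟨s.image σ, by rw [Finset.card_image_of_injective _ σ.injective, hs], ?_⟩
    rw [Finset.sum_image (fun a _ b _ h => σ.injective h)]
    rfl
  · rintro ⟨s, hs, rfl⟩
    refine ⟨s.image σ.symm, by rw [Finset.card_image_of_injective _ σ.symm.injective, hs], ?_⟩
    rw [Finset.sum_image (fun a _ b _ h => σ.symm.injective h)]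
    simp [Function.comp]

lemma isMajorizedBy_comp_perm {α β : Fin n → ℝ} (σ τ : Equiv.Perm (Fin n)) :
    IsMajorizedBy (α ∘ σ) (β ∘ τ) ↔ IsMajorizedBy α β := by
  unfold IsMajorizedBy
  simp only [Function.comp]
  rw [Equiv.sum_comp σ (fun i => α i), Equiv.sum_comp τ (fun i => β i)]
  constructor
  · rintro ⟨h1, h2⟩
    exact ⟨fun k hk => by
      have := h1 k hk
      rwa [kLargestSum_comp_perm, kLargestSum_comp_perm] at this, h2⟩
  · rintro ⟨h1, h2⟩
    exact ⟨fun k hk => by rw [kLargestSum_comp_perm, kLargestSum_comp_perm]; exact h1 k hk, h2⟩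


lemma exists_antitone_perm (β : Fin n → ℝ) : ∃ σ : Equiv.Perm (Fin n), Antitone (β ∘ σ) := by
  refine ⟨Tuple.sort (fun i => -β i), ?_⟩
  have h := Tuple.monotone_sort (fun i => -β i)
  intro i j hij
  have := h hij
  simp only [Function.comp] at this ⊢
  linarith

lemma lowSet_eq_filter {k : ℕ} (hk : k ≤ n) :
    lowSet k hk = Finset.univ.filter (fun j : Fin n => (j : ℕ) < k) := by
  ext i; simp [mem_lowSet, Finset.mem_filter]

/-- substochastic bound, antitone case -/
lemma substoch_bound_antitone (β c : Fin n → ℝ) (hβ : Antitone β) {k : ℕ} (hk : k ≤ n)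
    (hc0 : ∀ j, 0 ≤ c j) (hc1 : ∀ j, c j ≤ 1) (hcs : ∑ j, c j = (k : ℝ)) :
    ∑ j, c j * β j ≤ kLargestSum β k := by
  rcases eq_or_lt_of_le hk with heq | hlt
  · have hone : ∀ j ∈ Finset.univ, c j = 1 := by
      by_contra hcon
      push_neg at hcon
      obtain ⟨j0, -, hj0⟩ := hcon
      have hl : c j0 < 1 := lt_of_le_of_ne (hc1 j0) hj0
      have : ∑ j, c j < ∑ j : Fin n, (1 : ℝ) :=
        Finset.sum_lt_sum (fun j _ => hc1 j) ⟨j0, Finset.mem_univ _, hl⟩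
      simp only [Finset.sum_const, Finset.card_univ, Fintype.card_fin, nsmul_eq_mul,
        mul_one] at this
      rw [hcs, ← heq] at this
      exact lt_irrefl _ this
    have h2 : ∑ j, c j * β j = ∑ j, β j :=
      Finset.sum_congr rfl (fun j hj => by rw [hone j hj, one_mul])
    rw [h2]
    exact sum_le_kLargestSum β Finset.univ (by simp [heq])
  · set m := β ⟨k, hlt⟩ with hm
    set d := fun j : Fin n => if (j : ℕ) < k then (1 : ℝ) else 0 with hd
    have hds : ∑ j, d j = (k : ℝ) := by
      rw [hd]
      rw [show (∑ j : Fin n, if (j:ℕ) < k then (1:ℝ) else 0) =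
        ∑ j ∈ Finset.univ.filter (fun j : Fin n => (j:ℕ) < k), (1:ℝ) from
        (Finset.sum_filter _ _).symm]
      simp only [Finset.sum_const]
      rw [← lowSet_eq_filter hk, card_lowSet hk, nsmul_eq_mul, mul_one]
    have hdb : ∑ j, d j * β j = ∑ j ∈ lowSet k hk, β j := by
      rw [lowSet_eq_filter hk, Finset.sum_filter]
      refine Finset.sum_congr rfl (fun j _ => ?_)
      by_cases hj : (j : ℕ) < k <;> simp [hd, hj]
    have key : ∀ j : Fin n, (c j - d j) * (β j - m) ≤ 0 := by
      intro j
      by_cases hj : (j : ℕ) < k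
      · have h1 : c j - d j ≤ 0 := by simp only [hd, hj, if_true]; linarith [hc1 j]
        have h2 : 0 ≤ β j - m := by
          have : β ⟨k, hlt⟩ ≤ β j := hβ (by simp [Fin.le_def]; omega)
          simp only [hm]; linarith
        exact mul_nonpos_of_nonpos_of_nonneg h1 h2
      · have h1 : 0 ≤ c j - d j := by simp only [hd, hj, if_false]; simpa using hc0 j
        have h2 : β j - m ≤ 0 := by
          have : β j ≤ β ⟨k, hlt⟩ := hβ (by simp [Fin.le_def]; omega)
          simp only [hm]; linarith
        exact mul_nonpos_of_nonneg_of_nonpos h1 h2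
    have hsum : ∑ j, (c j - d j) * (β j - m) ≤ 0 :=
      Finset.sum_nonpos (fun j _ => key j)
    have hexp : ∑ j, (c j - d j) * (β j - m) =
        (∑ j, c j * β j) - (∑ j, d j * β j) - m * (∑ j, c j) + m * (∑ j, d j) := by
      rw [Finset.sum_congr rfl (fun j _ => (by ring :
        (c j - d j) * (β j - m) = c j * β j - d j * β j - m * c j + m * d j))]
      rw [Finset.sum_add_distrib, Finset.sum_sub_distrib, Finset.sum_sub_distrib,
        ← Finset.mul_sum, ← Finset.mul_sum]
    rw [hexp, hcs, hds] at hsum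
    have hfin : ∑ j ∈ lowSet k hk, β j ≤ kLargestSum β k :=
      sum_le_kLargestSum β _ (card_lowSet hk)
    rw [hdb] at hsum
    linarith

/-- substochastic bound -/
lemma substoch_bound (β c : Fin n → ℝ) {k : ℕ} (hk : k ≤ n)
    (hc0 : ∀ j, 0 ≤ c j) (hc1 : ∀ j, c j ≤ 1) (hcs : ∑ j, c j = (k : ℝ)) :
    ∑ j, c j * β j ≤ kLargestSum β k := by
  obtain ⟨σ, hσ⟩ := exists_antitone_perm β
  have hrw : ∑ j, c j * β j = ∑ j, (fun j => c (σ j)) j * (β ∘ σ) j :=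
    (Equiv.sum_comp σ (fun j => c j * β j)).symm
  rw [hrw, ← kLargestSum_comp_perm β σ k]
  exact substoch_bound_antitone (β ∘ σ) (fun j => c (σ j)) hσ hk (fun j => hc0 _)
    (fun j => hc1 _) (by rw [Equiv.sum_comp σ (fun j => c j)]; exact hcs)

/-- permutation matrix -/
def permM (σ : Equiv.Perm (Fin N)) : Matrix (Fin N) (Fin N) ℂ :=
  Matrix.of fun i j => if j = σ i then 1 else 0

lemma permM_mul (σ : Equiv.Perm (Fin N)) (A : Matrix (Fin N) (Fin N) ℂ) :
    permM σ * A = Matrix.of fun i j => A (σ i) j := by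
  ext i j
  simp only [Matrix.mul_apply, permM, Matrix.of_apply, ite_mul, one_mul, zero_mul]
  rw [Finset.sum_ite_eq' Finset.univ (σ i) (fun p => A p j)]
  simp

lemma mul_permM_star (σ : Equiv.Perm (Fin N)) (A : Matrix (Fin N) (Fin N) ℂ) :
    A * star (permM σ) = Matrix.of fun i j => A i (σ j) := by
  ext i j
  simp only [Matrix.mul_apply, Matrix.star_apply, permM, Matrix.of_apply,
    apply_ite (star : ℂ → ℂ), star_one, star_zero, mul_ite, mul_one, mul_zero]
  rw [Finset.sum_ite_eq' Finset.univ (σ j) (fun p => A i p)]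
  simp

lemma permM_conj (σ : Equiv.Perm (Fin N)) (A : Matrix (Fin N) (Fin N) ℂ) :
    permM σ * A * star (permM σ) = Matrix.of fun i j => A (σ i) (σ j) := by
  rw [permM_mul, mul_permM_star]
  rfl

lemma permM_mem (σ : Equiv.Perm (Fin N)) : permM σ ∈ Matrix.unitaryGroup (Fin N) ℂ := by
  rw [Matrix.mem_unitaryGroup_iff]
  have := mul_permM_star σ (permM σ)
  rw [this]
  ext i j
  simp only [Matrix.of_apply, permM, Matrix.one_apply]
  by_cases h : i = j
  · subst h; simp
  · rw [if_neg (fun hc => h (σ.injective hc).symm), if_neg h]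

/-- conjugating a diagonal matrix by a permutation matrix permutes the diagonal -/
lemma permM_conj_diagonal (σ : Equiv.Perm (Fin N)) (d : Fin N → ℂ) :
    permM σ * Matrix.diagonal d * star (permM σ) = Matrix.diagonal (fun i => d (σ i)) := by
  rw [permM_conj]
  ext i j
  by_cases h : i = j
  · simp [h, Matrix.diagonal_apply_eq]
  · have : ¬ σ i = σ j := fun hc => h (σ.injective hc)
    simp [Matrix.diagonal_apply_ne _ h, Matrix.diagonal_apply_ne _ this]

section rot
variable (K K1 : Fin N) (cθ sθ : ℝ)

/-- plane rotation matrix in coordinates K, K1 -/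
def rotM : Matrix (Fin N) (Fin N) ℂ :=
  Matrix.of fun i j =>
    if i = K then (if j = K then (cθ : ℂ) else if j = K1 then (sθ : ℂ) else 0)
    else if i = K1 then (if j = K then (-sθ : ℂ) else if j = K1 then (cθ : ℂ) else 0)
    else if j = i then 1 else 0

variable {K K1 cθ sθ}

lemma sum_pair_support {f : Fin N → ℂ} (hKK : K ≠ K1)
    (hf : ∀ p, p ≠ K → p ≠ K1 → f p = 0) : ∑ p, f p = f K + f K1 := by
  rw [show (Finset.univ : Finset (Fin N)) = insert K (insert K1 (Finset.univ \ {K, K1})) from ?_]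
  · rw [Finset.sum_insert, Finset.sum_insert]
    · rw [Finset.sum_eq_zero]
      · ring
      · intro p hp
        simp only [Finset.mem_sdiff, Finset.mem_insert, Finset.mem_singleton] at hp
        push_neg at hp
        exact hf p hp.2.1 hp.2.2
    · simp
    · simp [hKK]
  · ext p
    simp only [Finset.mem_insert, Finset.mem_sdiff, Finset.mem_univ, Finset.mem_singleton,
      true_and, Finset.mem_insert]
    by_cases h1 : p = K <;> by_cases h2 : p = K1 <;> simp [h1, h2]

lemma rotM_conj (hKK : K ≠ K1) (β : Fin N → ℝ) :
    rotM K K1 cθ sθ * Matrix.diagonal (fun i => (β i : ℂ)) * star (rotM K K1 cθ sθ) =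
    Matrix.of fun i j =>
      if i = K then (if j = K then ((cθ^2 * β K + sθ^2 * β K1 : ℝ) : ℂ)
        else if j = K1 then ((cθ * sθ * (β K1 - β K) : ℝ) : ℂ) else 0)
      else if i = K1 then (if j = K then ((cθ * sθ * (β K1 - β K) : ℝ) : ℂ)
        else if j = K1 then ((sθ^2 * β K + cθ^2 * β K1 : ℝ) : ℂ) else 0)
      else if j = i then ((β i : ℝ) : ℂ) else 0 := by
  ext i j
  rw [Matrix.mul_apply]
  simp only [Matrix.mul_diagonal, Matrix.star_apply]
  by_cases hi : i = K
  · rw [sum_pair_support hKK (f := fun q =>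
      rotM K K1 cθ sθ i q * (β q : ℂ) * star (rotM K K1 cθ sθ j q))]
    · simp only [rotM, Matrix.of_apply, Complex.star_def, Matrix.one_apply]
      split_ifs <;> subst_vars <;>
        simp_all [Complex.conj_ofReal, Matrix.one_apply] <;> push_cast <;> ring
    · intro p hp1 hp2
      simp [rotM, hi, hp1, hp2]
  · by_cases hi2 : i = K1
    · rw [sum_pair_support hKK (f := fun q =>
        rotM K K1 cθ sθ i q * (β q : ℂ) * star (rotM K K1 cθ sθ j q))]
      · simp only [rotM, Matrix.of_apply, Complex.star_def, Matrix.one_apply]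
        split_ifs <;> subst_vars <;>
        simp_all [Complex.conj_ofReal, Matrix.one_apply] <;> push_cast <;> ring
      · intro p hp1 hp2
        simp [rotM, hi, hi2, hp1, hp2]
    · rw [Finset.sum_eq_single i]
      · simp only [rotM, Matrix.of_apply, Complex.star_def, Matrix.one_apply]
        split_ifs <;> subst_vars <;>
        simp_all [Complex.conj_ofReal, Matrix.one_apply] <;> push_cast <;> ring
      · intro p _ hp
        have hz : rotM K K1 cθ sθ i p = 0 := by simp [rotM, hi, hi2, hp]
        simp [hz]
      · intro h
        exact absurd (Finset.mem_univ i) h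

lemma rotM_mem (hKK : K ≠ K1) (h1 : cθ^2 + sθ^2 = 1) :
    rotM K K1 cθ sθ ∈ Matrix.unitaryGroup (Fin N) ℂ := by
  have h1' : (cθ : ℂ)^2 + (sθ : ℂ)^2 = 1 := by
    have := congrArg (fun x : ℝ => (x : ℂ)) h1
    push_cast at this
    simpa using this
  rw [Matrix.mem_unitaryGroup_iff]
  ext i j
  rw [Matrix.mul_apply]
  simp only [Matrix.star_apply]
  by_cases hi : i = K
  · rw [sum_pair_support hKK (f := fun q =>
      rotM K K1 cθ sθ i q * star (rotM K K1 cθ sθ j q))]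
    · simp only [rotM, Matrix.of_apply, Complex.star_def, Matrix.one_apply]
      split_ifs <;> subst_vars <;>
        simp_all [Complex.conj_ofReal, Matrix.one_apply] <;>
        first | linear_combination h1' | linear_combination -h1' | (push_cast; ring)
    · intro p hp1 hp2
      simp [rotM, hi, hp1, hp2]
  · by_cases hi2 : i = K1
    · rw [sum_pair_support hKK (f := fun q =>
        rotM K K1 cθ sθ i q * star (rotM K K1 cθ sθ j q))]
      · simp only [rotM, Matrix.of_apply, Complex.star_def, Matrix.one_apply]
        split_ifs <;> subst_vars <;>
        simp_all [Complex.conj_ofReal, Matrix.one_apply] <;>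
        first | linear_combination h1' | linear_combination -h1' | (push_cast; ring)
      · intro p hp1 hp2
        simp [rotM, hi, hi2, hp1, hp2]
    · rw [Finset.sum_eq_single i]
      · simp only [rotM, Matrix.of_apply, Complex.star_def, Matrix.one_apply]
        split_ifs <;> subst_vars <;>
        simp_all [Complex.conj_ofReal, Matrix.one_apply] <;>
        first | linear_combination h1' | linear_combination -h1' | (push_cast; ring)
      · intro p _ hp
        have hz : rotM K K1 cθ sθ i p = 0 := by simp [rotM, hi, hi2, hp]
        simp [hz]
      · intro h
        exact absurd (Finset.mem_univ i) h

end rot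

section emb
variable {n : ℕ}

/-- embed an n×n matrix into the lower right block of an (n+1)×(n+1) matrix -/
def emb (V : Matrix (Fin n) (Fin n) ℂ) : Matrix (Fin (n + 1)) (Fin (n + 1)) ℂ :=
  Matrix.of fun i j =>
    Fin.cases (Fin.cases 1 (fun _ => 0) j) (fun i' => Fin.cases 0 (fun j' => V i' j') j) i

@[simp] lemma emb_zero_zero (V : Matrix (Fin n) (Fin n) ℂ) : emb V 0 0 = 1 := rfl
@[simp] lemma emb_zero_succ (V : Matrix (Fin n) (Fin n) ℂ) (j : Fin n) :
    emb V 0 j.succ = 0 := by simp [emb]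
@[simp] lemma emb_succ_zero (V : Matrix (Fin n) (Fin n) ℂ) (i : Fin n) :
    emb V i.succ 0 = 0 := by simp [emb]
@[simp] lemma emb_succ_succ (V : Matrix (Fin n) (Fin n) ℂ) (i j : Fin n) :
    emb V i.succ j.succ = V i j := by simp [emb]

lemma emb_mem {V : Matrix (Fin n) (Fin n) ℂ} (hV : V ∈ Matrix.unitaryGroup (Fin n) ℂ) :
    emb V ∈ Matrix.unitaryGroup (Fin (n + 1)) ℂ := by
  rw [Matrix.mem_unitaryGroup_iff]
  have hV' : V * star V = 1 := Matrix.mem_unitaryGroup_iff.mp hV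
  ext i j
  rw [Matrix.mul_apply]
  simp only [Matrix.star_apply]
  induction i using Fin.cases with
  | zero =>
      induction j using Fin.cases with
      | zero => simp [Fin.sum_univ_succ, Matrix.one_apply]
      | succ j => simp [Fin.sum_univ_succ, Matrix.one_apply, (Fin.succ_ne_zero j).symm]
  | succ i =>
      induction j using Fin.cases with
      | zero => simp [Fin.sum_univ_succ, Matrix.one_apply, Fin.succ_ne_zero i]
      | succ j =>
          rw [Fin.sum_univ_succ]
          simp only [emb_succ_zero, emb_succ_succ, zero_mul, zero_add]
          have := congrFun (congrFun hV' i) j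
          rw [Matrix.mul_apply] at this
          simp only [Matrix.star_apply] at this
          rw [this]
          by_cases h : i = j
          · simp [h, Matrix.one_apply]
          · simp [Matrix.one_apply, h, fun hc : i.succ = j.succ => h (Fin.succ_injective _ hc)]

lemma emb_conj_zero (V : Matrix (Fin n) (Fin n) ℂ) (A : Matrix (Fin (n+1)) (Fin (n+1)) ℂ) :
    (emb V * A * star (emb V)) 0 0 = A 0 0 := by
  rw [Matrix.mul_apply]
  have h1 : ∀ q, (emb V * A) 0 q = A 0 q := by
    intro q
    rw [Matrix.mul_apply, Fin.sum_univ_succ]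
    simp
  simp only [h1, Matrix.star_apply]
  rw [Fin.sum_univ_succ]
  simp

lemma emb_conj_succ (V : Matrix (Fin n) (Fin n) ℂ) (A : Matrix (Fin (n+1)) (Fin (n+1)) ℂ)
    (i : Fin n) :
    (emb V * A * star (emb V)) i.succ i.succ =
      (V * (Matrix.of fun p q : Fin n => A p.succ q.succ) * star V) i i := by
  rw [Matrix.mul_apply]
  have h1 : ∀ q, (emb V * A) i.succ q = ∑ p : Fin n, V i p * A p.succ q := by
    intro q
    rw [Matrix.mul_apply, Fin.sum_univ_succ]
    simp
  simp only [h1, Matrix.star_apply]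
  rw [Fin.sum_univ_succ]
  simp only [emb_succ_zero, star_zero, mul_zero, zero_add, emb_succ_succ]
  rw [Matrix.mul_apply]
  apply Finset.sum_congr rfl
  intro q _
  rw [Matrix.mul_apply]
  simp only [Matrix.star_apply, Matrix.of_apply]

end emb

lemma conj_conj {N : ℕ} (P W A : Matrix (Fin N) (Fin N) ℂ) :
    P * (W * A * star W) * star P = (P * W) * A * star (P * W) := by
  rw [Matrix.star_mul]
  noncomm_ring

lemma antitone_comp_succ {n : ℕ} {α : Fin (n+1) → ℝ} (hα : Antitone α) :
    Antitone (fun j : Fin n => α j.succ) :=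
  fun i j hij => hα (Fin.succ_le_succ_iff.mpr hij)

lemma sum_lowSet_succ {n : ℕ} (f : Fin (n+1) → ℝ) {m : ℕ} (hm : m ≤ n) :
    ∑ i ∈ lowSet (m+1) (Nat.succ_le_succ hm), f i
      = f 0 + ∑ j ∈ lowSet m hm, f j.succ := by
  have hset : lowSet (m+1) (Nat.succ_le_succ hm)
      = insert (0 : Fin (n+1)) ((lowSet m hm).image Fin.succ) := by
    ext i
    simp only [mem_lowSet, Finset.mem_insert, Finset.mem_image]
    constructor
    · intro hi
      rcases Fin.eq_zero_or_eq_succ i with h0 | ⟨j, rfl⟩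
      · exact Or.inl h0
      · exact Or.inr ⟨j, by simpa [Fin.val_succ] using hi, rfl⟩
    · rintro (rfl | ⟨j, hj, rfl⟩)
      · simp
      · simp only [Fin.val_succ]; omega
  rw [hset, Finset.sum_insert, Finset.sum_image]
  · intro a _ b _ h; exact Fin.succ_injective _ h
  · simp only [Finset.mem_image]
    rintro ⟨j, -, hj⟩
    exact Fin.succ_ne_zero j hj

lemma sum_lowSet_one {n : ℕ} (f : Fin (n+1) → ℝ) :
    ∑ i ∈ lowSet 1 (Nat.succ_le_succ (Nat.zero_le n)), f i = f 0 := by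
  have : lowSet 1 (Nat.succ_le_succ (Nat.zero_le n)) = {0} := by
    ext i
    simp only [mem_lowSet, Finset.mem_singleton, Fin.ext_iff, Fin.val_zero]
    omega
  rw [this, Finset.sum_singleton]

/-- The inductive step for sorted vectors. -/
lemma horn_step {n : ℕ}
    (IH : ∀ α' β' : Fin n → ℝ, IsMajorizedBy α' β' →
      ∃ V ∈ Matrix.unitaryGroup (Fin n) ℂ,
        Matrix.diag (V * Matrix.diagonal (fun i => (β' i : ℂ)) * star V)
          = fun i => (α' i : ℂ))
    (α β : Fin (n+1) → ℝ) (hα : Antitone α) (hβ : Antitone β) (h : IsMajorizedBy α β) :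
    ∃ U ∈ Matrix.unitaryGroup (Fin (n+1)) ℂ,
      Matrix.diag (U * Matrix.diagonal (fun i => (β i : ℂ)) * star U)
        = fun i => (α i : ℂ) := by
  have hps : ∀ m (hm : m ≤ n+1), ∑ i ∈ lowSet m hm, α i ≤ ∑ i ∈ lowSet m hm, β i := by
    intro m hm
    have := h.1 m hm
    rwa [kLargestSum_antitone hα hm, kLargestSum_antitone hβ hm] at this
  have hsum : ∑ i, α i = ∑ i, β i := h.2
  by_cases hcase : α 0 ≤ β (Fin.last n)
  · -- pointwise equal case
    have hpt : ∀ i, α i ≤ β i := fun i =>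
      le_trans (hα (Fin.zero_le i)) (le_trans hcase (hβ (Fin.le_last i)))
    have heq : ∀ i, α i = β i := by
      by_contra hc
      push_neg at hc
      obtain ⟨i0, hi0⟩ := hc
      have : ∑ i, α i < ∑ i, β i :=
        Finset.sum_lt_sum (fun i _ => hpt i)
          ⟨i0, Finset.mem_univ _, lt_of_le_of_ne (hpt i0) hi0⟩
      exact absurd hsum (ne_of_lt this)
    refine ⟨1, ?_, ?_⟩
    · rw [Matrix.mem_unitaryGroup_iff]; simp
    · rw [star_one, mul_one, one_mul]
      funext i
      simp [Matrix.diag, heq i]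
  · push_neg at hcase
    -- find the pivot index K
    have h0T : α 0 ≤ β 0 := by
      have := hps 1 (by omega)
      rwa [sum_lowSet_one α, sum_lowSet_one β] at this
    set T := Finset.univ.filter (fun k : Fin (n+1) => α 0 ≤ β k) with hT
    have h0T' : (0 : Fin (n+1)) ∈ T := by simp [hT, h0T]
    set K := T.max' ⟨0, h0T'⟩ with hKdef
    have hK : α 0 ≤ β K := by
      have := T.max'_mem ⟨0, h0T'⟩
      simp only [hT, Finset.mem_filter] at this
      exact this.2
    have hKn : (K : ℕ) < n := by
      rcases lt_or_eq_of_le (Nat.lt_succ_iff.mp K.isLt) with h | h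
      · exact h
      · exfalso
        have : K = Fin.last n := Fin.ext h
        rw [this] at hK
        linarith
    set K1 : Fin (n+1) := ⟨(K : ℕ) + 1, by omega⟩ with hK1def
    have hK1 : β K1 < α 0 := by
      by_contra hc
      push_neg at hc
      have hmem : K1 ∈ T := by simp [hT, hc]
      have := T.le_max' K1 hmem
      rw [← hKdef] at this
      have : (K1 : ℕ) ≤ (K : ℕ) := this
      simp [hK1def] at this
    have hKK1 : K ≠ K1 := by
      intro hc
      have := congrArg Fin.val hc
      simp [hK1def] at this
    set a := β K with ha
    set b := β K1 with hb
    have hba : b < a := lt_of_lt_of_le hK1 hK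
    set t := (α 0 - b) / (a - b) with htdef
    have habne : a - b ≠ 0 := by linarith
    have ht0 : 0 ≤ t := div_nonneg (by linarith) (by linarith)
    have ht1 : t ≤ 1 := by
      rw [div_le_one (by linarith)]
      linarith
    set cθ := Real.sqrt t with hcθ
    set sθ := Real.sqrt (1 - t) with hsθ
    have hc2 : cθ^2 = t := Real.sq_sqrt ht0
    have hs2 : sθ^2 = 1 - t := Real.sq_sqrt (by linarith)
    have hcs1 : cθ^2 + sθ^2 = 1 := by rw [hc2, hs2]; ring
    have htab : t * (a - b) = α 0 - b := div_mul_cancel₀ _ habne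
    have vKK : cθ^2 * a + sθ^2 * b = α 0 := by rw [hc2, hs2]; linarith [htab]
    have vK1K1 : sθ^2 * a + cθ^2 * b = a + b - α 0 := by rw [hc2, hs2]; linarith [htab]
    set G := rotM K K1 cθ sθ with hG
    set A := G * Matrix.diagonal (fun i => (β i : ℂ)) * star G with hA
    have hAform := rotM_conj (cθ := cθ) (sθ := sθ) hKK1 β
    rw [← hG, ← hA] at hAform
    set τ := Equiv.swap (0 : Fin (n+1)) K with hτ
    have hτ0 : τ 0 = K := Equiv.swap_apply_left 0 K
    have hτK : τ K = 0 := Equiv.swap_apply_right 0 K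
    have hτother : ∀ x : Fin (n+1), x ≠ 0 → x ≠ K → τ x = x :=
      fun x h1 h2 => Equiv.swap_apply_of_ne_of_ne h1 h2
    have hK1ne0 : K1 ≠ 0 := by
      intro hc; have := congrArg Fin.val hc; simp [hK1def] at this
    have hτK1 : τ K1 = K1 := hτother K1 hK1ne0 (Ne.symm hKK1)
    have hτsuccK : ∀ p : Fin n, τ p.succ ≠ K := by
      intro p hc
      have : p.succ = (0 : Fin (n+1)) := τ.injective (hc.trans hτ0.symm)
      exact Fin.succ_ne_zero p this
    set j₀ : Fin n := ⟨(K : ℕ), hKn⟩ with hj₀def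
    have hj₀succ : (j₀.succ : Fin (n+1)) = K1 := by
      apply Fin.ext
      simp [hK1def, hj₀def]
    set β' : Fin n → ℝ := fun j => if j = j₀ then a + b - α 0 else β (τ j.succ) with hβ'
    set A' := permM τ * A * star (permM τ) with hA'
    have hA'form : A' = Matrix.of fun i j => A (τ i) (τ j) := permM_conj τ A
    have hA'00 : A' 0 0 = ((α 0 : ℝ) : ℂ) := by
      rw [hA'form]
      simp only [Matrix.of_apply, hτ0]
      rw [hAform]
      simp only [Matrix.of_apply, if_pos rfl]
      rw [← ha, ← hb, vKK]
      simp
    have hA'succ : ∀ p q : Fin n,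
        A (τ p.succ) (τ q.succ) = Matrix.diagonal (fun j => (β' j : ℂ)) p q := by
      intro p q
      have hpK : τ p.succ ≠ K := hτsuccK p
      have hqK : τ q.succ ≠ K := hτsuccK q
      by_cases hpq : p = q
      · subst hpq
        by_cases hpj : p = j₀
        · subst hpj
          rw [hj₀succ] at *
          rw [hτK1, hAform]
          simp only [Matrix.of_apply, if_neg (Ne.symm hKK1), if_pos rfl]
          rw [Matrix.diagonal_apply_eq]
          simp only [hβ', if_pos rfl]
          rw [← ha, ← hb, vK1K1]
          simp
        · have hpK1 : τ p.succ ≠ K1 := by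
            intro hc
            have : p.succ = K1 := τ.injective (hc.trans hτK1.symm)
            rw [← hj₀succ] at this
            exact hpj (Fin.succ_injective _ this)
          rw [hAform]
          simp only [Matrix.of_apply, if_neg hpK, if_neg hpK1, if_pos rfl]
          rw [Matrix.diagonal_apply_eq]
          simp only [hβ', if_neg hpj]
          try simp
      · have hne : τ p.succ ≠ τ q.succ :=
          fun hc => hpq (Fin.succ_injective _ (τ.injective hc))
        rw [Matrix.diagonal_apply_ne _ hpq, hAform]
        simp only [Matrix.of_apply, if_neg hpK]
        by_cases hpK1 : τ p.succ = K1
        · rw [if_pos hpK1]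
          rw [if_neg hqK, if_neg]
          intro hc
          exact hne (hpK1.trans hc.symm)
        · rw [if_neg hpK1, if_neg]
          exact fun hc => hne hc.symm
    -- the majorization for the induction hypothesis
    have hsumβ' : ∑ j, β' j = (∑ i, β i) - α 0 := by
      have h1 : ∀ j, β' j = β (τ j.succ) + (if j = j₀ then a - α 0 else 0) := by
        intro j
        by_cases hj : j = j₀
        · subst hj
          simp only [hβ', if_pos rfl, hj₀succ, hτK1, ← hb, if_true]
          ring
        · simp [hβ', hj]
      rw [Finset.sum_congr rfl (fun j _ => h1 j), Finset.sum_add_distrib,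
        Finset.sum_ite_eq' Finset.univ j₀ (fun _ => a - α 0)]
      have h2 : ∑ j : Fin n, β (τ j.succ) = (∑ i, β i) - a := by
        have h3 : ∑ i : Fin (n+1), β (τ i) = ∑ i, β i := Equiv.sum_comp τ (fun i => β i)
        rw [Fin.sum_univ_succ (fun i => β (τ i))] at h3
        rw [hτ0, ← ha] at h3
        linarith
      rw [h2]
      simp
      try ring
    have hmaj' : IsMajorizedBy (fun j => α j.succ) β' := by
      constructor
      · intro m hm
        rw [kLargestSum_antitone (antitone_comp_succ hα) hm]
        have hbd : ∑ j ∈ lowSet m hm, β' j ≤ kLargestSum β' m :=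
          sum_le_kLargestSum β' _ (card_lowSet hm)
        refine le_trans ?_ hbd
        by_cases hmK : m ≤ (K : ℕ)
        · apply Finset.sum_le_sum
          intro j hj
          have hjm : (j : ℕ) < m := (mem_lowSet hm j).mp hj
          have hjj₀ : j ≠ j₀ := by
            intro hc
            have := congrArg Fin.val hc
            simp [hj₀def] at this
            omega
          have hβ'j : β' j = β (τ j.succ) := by simp [hβ', hjj₀]
          have hτval : (τ j.succ : ℕ) ≤ (K : ℕ) := by
            by_cases hjK : j.succ = K
            · rw [hjK, hτK]; exact Nat.zero_le _
            · rw [hτother j.succ (Fin.succ_ne_zero j) hjK]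
              simp only [Fin.val_succ]
              by_cases hjK1 : (j : ℕ) + 1 = (K : ℕ)
              · omega
              · -- j+1 ≤ m ≤ K
                omega
          have hord : β K ≤ β (τ j.succ) := hβ (by rw [Fin.le_def]; exact hτval)
          have : α j.succ ≤ α 0 := hα (Fin.zero_le _)
          rw [hβ'j]
          linarith [hK]
        · push_neg at hmK
          have hm1 : m + 1 ≤ n + 1 := by omega
          have hL : ∑ j ∈ lowSet m hm, α j.succ = (∑ i ∈ lowSet (m+1) hm1, α i) - α 0 := by
            have := sum_lowSet_succ α hm
            -- proof irrelevance for the bound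
            rw [show (Nat.succ_le_succ hm) = hm1 from rfl] at this
            linarith
          have hR : ∑ j ∈ lowSet m hm, β' j = (∑ i ∈ lowSet (m+1) hm1, β i) - α 0 := by
            have h1 : ∀ j, β' j = β (τ j.succ) + (if j = j₀ then a - α 0 else 0) := by
              intro j
              by_cases hj : j = j₀
              · subst hj
                simp only [hβ', if_pos rfl, hj₀succ, hτK1, ← hb, if_true]
                ring
              · simp [hβ', hj]
            rw [Finset.sum_congr rfl (fun j _ => h1 j), Finset.sum_add_distrib]
            have hj₀mem : j₀ ∈ lowSet m hm := (mem_lowSet hm j₀).mpr (by simp [hj₀def]; omega)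
            rw [Finset.sum_ite_eq' (lowSet m hm) j₀ (fun _ => a - α 0), if_pos hj₀mem]
            have h2 : ∑ j ∈ lowSet m hm, β (τ j.succ)
                = (∑ i ∈ lowSet (m+1) hm1, β (τ i)) - a := by
              have := sum_lowSet_succ (fun i => β (τ i)) hm
              rw [show (Nat.succ_le_succ hm) = hm1 from rfl] at this
              rw [hτ0, ← ha] at this
              linarith
            have h3 : ∑ i ∈ lowSet (m+1) hm1, β (τ i) = ∑ i ∈ lowSet (m+1) hm1, β i := by
              apply Finset.sum_nbij' (fun i => τ i) (fun i => τ i)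
              · intro i hi
                have hv : (i : ℕ) < m + 1 := (mem_lowSet hm1 i).mp hi
                apply (mem_lowSet hm1 (τ i)).mpr
                by_cases h0 : i = 0
                · rw [h0, hτ0]; exact Nat.lt_succ_of_lt hmK
                · by_cases hKi : i = K
                  · rw [hKi, hτK]; simp
                  · rw [hτother i h0 hKi]; exact hv
              · intro i hi
                have hv : (i : ℕ) < m + 1 := (mem_lowSet hm1 i).mp hi
                apply (mem_lowSet hm1 (τ i)).mpr
                by_cases h0 : i = 0
                · rw [h0, hτ0]; exact Nat.lt_succ_of_lt hmK
                · by_cases hKi : i = K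
                  · rw [hKi, hτK]; simp
                  · rw [hτother i h0 hKi]; exact hv
              · intro i _; exact Equiv.swap_apply_self _ _ i
              · intro i _; exact Equiv.swap_apply_self _ _ i
              · intro i _; rfl
            rw [h2, h3]
            ring
          rw [hL, hR]
          have := hps (m+1) hm1
          linarith
      · rw [hsumβ']
        rw [Fin.sum_univ_succ α] at hsum
        linarith
    obtain ⟨V, hVmem, hV⟩ := IH (fun j => α j.succ) β' hmaj'
    refine ⟨emb V * (permM τ * G), ?_, ?_⟩
    · exact mul_mem (emb_mem hVmem) (mul_mem (permM_mem τ) (rotM_mem hKK1 hcs1))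
    · have hconj : emb V * (permM τ * G) * Matrix.diagonal (fun i => (β i : ℂ))
          * star (emb V * (permM τ * G))
          = emb V * A' * star (emb V) := by
        rw [hA', hA]
        rw [← conj_conj (emb V), ← conj_conj (permM τ)]
      rw [hconj]
      funext i
      induction i using Fin.cases with
      | zero =>
          show (emb V * A' * star (emb V)) 0 0 = _
          rw [emb_conj_zero, hA'00]
      | succ i =>
          show (emb V * A' * star (emb V)) i.succ i.succ = _
          rw [emb_conj_succ]
          have hblock : (Matrix.of fun p q : Fin n => A' p.succ q.succ)
              = Matrix.diagonal (fun j => (β' j : ℂ)) := by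
            ext p q
            simp only [Matrix.of_apply]
            rw [hA'form]
            exact hA'succ p q
          rw [hblock]
          have := congrFun hV i
          exact this


/-- the Horn direction -/
lemma horn (n : ℕ) : ∀ α β : Fin n → ℝ, IsMajorizedBy α β →
    ∃ U ∈ Matrix.unitaryGroup (Fin n) ℂ,
      Matrix.diag (U * Matrix.diagonal (fun i => (β i : ℂ)) * star U)
        = fun i => (α i : ℂ) := by
  induction n with
  | zero =>
      intro α β _
      refine ⟨1, ?_, ?_⟩
      · rw [Matrix.mem_unitaryGroup_iff]; simp
      · funext i; exact i.elim0
  | succ n IH =>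
      intro α β hmaj
      obtain ⟨σa, hσa⟩ := exists_antitone_perm α
      obtain ⟨σb, hσb⟩ := exists_antitone_perm β
      have hmaj' : IsMajorizedBy (α ∘ σa) (β ∘ σb) := (isMajorizedBy_comp_perm σa σb).mpr hmaj
      obtain ⟨U₀, hU₀mem, hU₀⟩ := horn_step IH (α ∘ σa) (β ∘ σb) hσa hσb hmaj'
      refine ⟨permM σa⁻¹ * (U₀ * permM σb),
        mul_mem (permM_mem _) (mul_mem hU₀mem (permM_mem _)), ?_⟩
      have e1 : permM σb * Matrix.diagonal (fun i => (β i : ℂ)) * star (permM σb)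
          = Matrix.diagonal (fun i => ((α ∘ σa) i : ℂ) + (((β ∘ σb) i : ℂ) - ((α ∘ σa) i : ℂ))) := by
        rw [permM_conj_diagonal]
        congr 1
        funext i
        simp [Function.comp]
      have e1' : permM σb * Matrix.diagonal (fun i => (β i : ℂ)) * star (permM σb)
          = Matrix.diagonal (fun i => ((β ∘ σb) i : ℂ)) := by
        rw [permM_conj_diagonal]
        rfl
      have e2 : (U₀ * permM σb) * Matrix.diagonal (fun i => (β i : ℂ)) * star (U₀ * permM σb)
          = U₀ * Matrix.diagonal (fun i => ((β ∘ σb) i : ℂ)) * star U₀ := by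
        rw [← conj_conj U₀ (permM σb), e1']
      have e3 : permM σa⁻¹ * (U₀ * permM σb) * Matrix.diagonal (fun i => (β i : ℂ))
            * star (permM σa⁻¹ * (U₀ * permM σb))
          = permM σa⁻¹ * ((U₀ * permM σb) * Matrix.diagonal (fun i => (β i : ℂ))
            * star (U₀ * permM σb)) * star (permM σa⁻¹) :=
        (conj_conj _ _ _).symm
      rw [e3, e2, permM_conj]
      funext i
      have h4 := congrFun hU₀ (σa⁻¹ i)
      simp only [Matrix.diag] at h4 ⊢
      simp only [Matrix.of_apply]
      rw [h4]
      simp [Function.comp]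

/-- the Schur direction -/
lemma schur {N : ℕ} (β : Fin N → ℝ) (U : Matrix (Fin N) (Fin N) ℂ)
    (hU : U ∈ Matrix.unitaryGroup (Fin N) ℂ) :
    IsMajorizedBy (fun i => ∑ j, Complex.normSq (U i j) * β j) β ∧
    Matrix.diag (U * Matrix.diagonal (fun i => (β i : ℂ)) * star U)
      = fun i => ((∑ j, Complex.normSq (U i j) * β j : ℝ) : ℂ) := by
  have hUU : U * star U = 1 := Matrix.mem_unitaryGroup_iff.mp hU
  have hUU' : star U * U = 1 := Matrix.mem_unitaryGroup_iff'.mp hU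
  have hrow : ∀ i, ∑ j, Complex.normSq (U i j) = 1 := by
    intro i
    have h1 := congrFun (congrFun hUU i) i
    rw [Matrix.mul_apply] at h1
    simp only [Matrix.star_apply, Matrix.one_apply_eq] at h1
    have h2 : ∑ j, ((Complex.normSq (U i j) : ℂ)) = 1 := by
      rw [← h1]
      exact Finset.sum_congr rfl (fun j _ => (Complex.mul_conj (U i j)).symm)
    have h3 : ((∑ j, Complex.normSq (U i j) : ℝ) : ℂ) = 1 := by push_cast; exact h2
    exact_mod_cast h3
  have hcol : ∀ j, ∑ i, Complex.normSq (U i j) = 1 := by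
    intro j
    have h1 := congrFun (congrFun hUU' j) j
    rw [Matrix.mul_apply] at h1
    simp only [Matrix.star_apply, Matrix.one_apply_eq] at h1
    have h2 : ∑ i, ((Complex.normSq (U i j) : ℂ)) = 1 := by
      rw [← h1]
      refine Finset.sum_congr rfl (fun i _ => ?_)
      rw [mul_comm]
      exact (Complex.mul_conj (U i j)).symm
    have h3 : ((∑ i, Complex.normSq (U i j) : ℝ) : ℂ) = 1 := by push_cast; exact h2
    exact_mod_cast h3
  constructor
  · constructor
    · intro k hk
      apply kLargestSum_le _ hk
      intro s hs
      have hswap : ∑ i ∈ s, ∑ j, Complex.normSq (U i j) * β j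
          = ∑ j, (∑ i ∈ s, Complex.normSq (U i j)) * β j := by
        rw [Finset.sum_comm]
        exact Finset.sum_congr rfl (fun j _ => (Finset.sum_mul _ _ _).symm)
      rw [hswap]
      apply substoch_bound β _ hk
      · intro j
        exact Finset.sum_nonneg (fun i _ => Complex.normSq_nonneg _)
      · intro j
        calc ∑ i ∈ s, Complex.normSq (U i j)
            ≤ ∑ i, Complex.normSq (U i j) :=
              Finset.sum_le_sum_of_subset_of_nonneg (Finset.subset_univ s)
                (fun i _ _ => Complex.normSq_nonneg _)
          _ = 1 := hcol j
      · rw [Finset.sum_comm]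
        rw [Finset.sum_congr rfl (fun i (_ : i ∈ s) => hrow i)]
        simp [hs]
    · rw [Finset.sum_comm]
      rw [Finset.sum_congr rfl (fun j (_ : j ∈ Finset.univ) =>
        (Finset.sum_mul _ _ _).symm : ∀ j ∈ Finset.univ, _ = _)]
      exact Finset.sum_congr rfl (fun j _ => by rw [hcol j, one_mul])
  · funext i
    simp only [Matrix.diag]
    rw [Matrix.mul_apply]
    push_cast
    refine Finset.sum_congr rfl (fun j _ => ?_)
    rw [Matrix.mul_diagonal]
    simp only [Matrix.star_apply, Complex.star_def]
    rw [mul_comm (Complex.normSq (U i j) : ℂ) ((β j : ℂ))]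
    rw [← Complex.mul_conj (U i j)]
    ring


end SH

/-- **Schur–Horn theorem** for matrices: the diagonal compressions of the unitary
orbit of the diagonal matrix `M_β` are exactly the diagonal matrices `M_α` with `α ≺ β`. -/
theorem schur_horn_matrices {n : ℕ} (β : Fin n → ℝ) :
    {D : Matrix (Fin n) (Fin n) ℂ |
        ∃ U ∈ Matrix.unitaryGroup (Fin n) ℂ,
          D = Matrix.diagonal (Matrix.diag
            ((U : Matrix (Fin n) (Fin n) ℂ) * Matrix.diagonal (fun i => (β i : ℂ)) *
              star (U : Matrix (Fin n) (Fin n) ℂ)))} =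
      {D : Matrix (Fin n) (Fin n) ℂ |
        ∃ α : Fin n → ℝ, IsMajorizedBy α β ∧ D = Matrix.diagonal fun i => (α i : ℂ)} := by
  ext D
  simp only [Set.mem_setOf_eq]
  constructor
  · rintro ⟨U, hU, rfl⟩
    obtain ⟨hmaj, hdiag⟩ := SH.schur β U hU
    exact ⟨_, hmaj, by rw [hdiag]⟩
  · rintro ⟨α, hmaj, rfl⟩
    obtain ⟨U, hUmem, hdiag⟩ := SH.horn n α β hmaj
    exact ⟨U, hUmem, by rw [hdiag]⟩
end

section
/- Let f, g : [0,1) → ℝ be decreasing integrable functions with ∫₀¹ f = ∫₀¹ g and ∫₀ˢ f(t) dt ≤ ∫₀ˢ g(t) dt for all s ∈ [0,1). Fix n and partition [0,1] into 2ⁿ dyadic intervals I_i of length 2⁻ⁿ; set α_i = 2ⁿ ∫_{I_i} f and β_i = 2ⁿ ∫_{I_i} g. Then the vectors α = (α_1,…,α_{2ⁿ}) and β = (β_1,…,β_{2ⁿ}) have decreasing entries and α ≺ β in ℝ^{2ⁿ}. -/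
/-!
Shifting a window to the right can only lower the integral of a decreasing function, so the
cell means of `f` decrease. For a decreasing vector the sum of its `k` largest entries is the
sum of its first `k` entries, which for the cell means of `f` is `2ⁿ ∫₀^{k/2ⁿ} f`. Majorization
is therefore the hypothesis `∫₀ˢ f ≤ ∫₀ˢ g` read at the dyadic points `s = k/2ⁿ`, with
`∫₀¹ f = ∫₀¹ g` at `s = 1`.
-/

open MeasureTheory

open Finset

lemma MeasureTheory.IntegrableOn.intervalIntegrable_of_Ico {f : ℝ → ℝ} {a b c d : ℝ}
    (hf : IntegrableOn f (Set.Ico a b)) (hc : c ∈ Set.Icc a b) (hd : d ∈ Set.Icc a b) :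
    IntervalIntegrable f volume c d :=
  ((integrableOn_Icc_iff_integrableOn_Ico).mpr hf
    |>.mono_set (Set.uIcc_subset_Icc hc hd)).intervalIntegrable

lemma AntitoneOn.integral_shift_right_le {f : ℝ → ℝ} {a b c d h : ℝ}
    (hf : AntitoneOn f (Set.Ico a b)) (hfi : IntegrableOn f (Set.Ico a b))
    (hac : a ≤ c) (hcd : c ≤ d) (hh : 0 ≤ h) (hdb : d + h ≤ b) :
    ∫ t in (c + h)..(d + h), f t ≤ ∫ t in c..d, f t := by
  have hshift : IntervalIntegrable (fun t => f (t + h)) volume c d := by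
    simpa using (hfi.intervalIntegrable_of_Ico (c := c + h) (d := d + h)
      ⟨by linarith, by linarith⟩ ⟨by linarith, hdb⟩).comp_add_right h
  rw [← intervalIntegral.integral_comp_add_right]
  -- on the open interval `x + h < d + h ≤ b`, so `x + h` stays in `[a, b)`
  refine intervalIntegral.integral_mono_on_of_le_Ioo hcd hshift
    (hfi.intervalIntegrable_of_Ico ⟨hac, by linarith⟩ ⟨by linarith, by linarith⟩)
    fun x hx => hf ⟨by linarith [hx.1], by linarith [hx.2]⟩
      ⟨by linarith [hx.1], by linarith [hx.2]⟩ (by linarith)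

lemma Fin.val_le_val_of_strictMono {k N : ℕ} {φ : Fin k → Fin N} (hφ : StrictMono φ)
    (j : Fin k) : (j : ℕ) ≤ φ j := by
  simpa using card_le_card (s := (Iio j).map ⟨φ, hφ.injective⟩) (t := Iio (φ j))
    fun _ hx => by
      obtain ⟨i, hi, rfl⟩ := mem_map.mp hx
      exact mem_Iio.mpr (hφ (mem_Iio.mp hi))

lemma kLargestSum_eq_sum_castLE_of_antitone {N k : ℕ} {α : Fin N → ℝ} (hα : Antitone α)
    (hk : k ≤ N) : kLargestSum α k = ∑ j : Fin k, α (Fin.castLE hk j) := by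
  refine IsGreatest.csSup_eq ⟨⟨univ.map (Fin.castLEEmb hk), by simp, by simp⟩, ?_⟩
  rintro x ⟨s, hs, rfl⟩
  let φ := s.orderEmbOfFin hs
  calc ∑ i ∈ s, α i = ∑ j : Fin k, α (φ j) := by
        rw [← s.map_orderEmbOfFin_univ hs, sum_map]; rfl
    _ ≤ ∑ j : Fin k, α (Fin.castLE hk j) :=
        sum_le_sum fun j _ => hα (Fin.le_def.mpr (Fin.val_le_val_of_strictMono φ.strictMono j))

lemma isMajorizedBy_of_antitone {N : ℕ} {α β : Fin N → ℝ}
    (hα : Antitone α) (hβ : Antitone β)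
    (hprefix : ∀ k (hk : k ≤ N),
      ∑ j : Fin k, α (Fin.castLE hk j) ≤ ∑ j : Fin k, β (Fin.castLE hk j))
    (hsum : ∑ i, α i = ∑ i, β i) : IsMajorizedBy α β :=
  ⟨fun k hk => by
    rw [kLargestSum_eq_sum_castLE_of_antitone hα hk, kLargestSum_eq_sum_castLE_of_antitone hβ hk]
    exact hprefix k hk, hsum⟩

/-- The paper's `α_i` for `N = 2ⁿ`: the mean of `f` over the cell `[i/N, (i+1)/N]`. -/
noncomputable def cellAverages (f : ℝ → ℝ) (N : ℕ) (i : Fin N) : ℝ :=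
  N * ∫ t in (i : ℝ) / N..((i : ℝ) + 1) / N, f t

section CellAverages

variable {f : ℝ → ℝ} {N : ℕ}

lemma antitone_cellAverages (hf : AntitoneOn f (Set.Ico 0 1))
    (hfi : IntegrableOn f (Set.Ico 0 1)) : Antitone (cellAverages f N) := by
  intro i j hij
  have hij' : (i : ℝ) ≤ j := by exact_mod_cast hij
  have hj : ((j : ℝ) + 1) / N ≤ 1 :=
    div_le_one_of_le₀ (by exact_mod_cast j.isLt) N.cast_nonneg
  refine mul_le_mul_of_nonneg_left ?_ N.cast_nonneg
  have hshift : ∀ x : ℝ, x / N + (j - i) / N = (x + (j - i)) / N := fun x => by ring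
  calc ∫ t in (j : ℝ) / N..((j : ℝ) + 1) / N, f t
      = ∫ t in (i : ℝ) / N + (j - i) / N..((i : ℝ) + 1) / N + (j - i) / N, f t := by
        simp only [hshift]; ring_nf
    _ ≤ ∫ t in (i : ℝ) / N..((i : ℝ) + 1) / N, f t :=
      hf.integral_shift_right_le hfi (by positivity)
        (div_le_div_of_nonneg_right (by linarith) N.cast_nonneg)
        (div_nonneg (sub_nonneg.2 hij') N.cast_nonneg) (by rw [hshift]; convert hj using 2; ring)

lemma sum_cellAverages_castLE (hfi : IntegrableOn f (Set.Ico 0 1)) {k : ℕ} (hk : k ≤ N) :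
    ∑ j : Fin k, cellAverages f N (Fin.castLE hk j) =
      N * ∫ t in (0 : ℝ)..(k : ℝ) / N, f t := by
  have hmem : ∀ m ≤ k, (m : ℝ) / N ∈ Set.Icc (0 : ℝ) 1 := fun m hm =>
    ⟨by positivity, div_le_one_of_le₀ (by exact_mod_cast hm.trans hk) N.cast_nonneg⟩
  simp only [cellAverages, Fin.val_castLE]
  rw [Fin.sum_univ_eq_sum_range
    (fun j => (N : ℝ) * ∫ t in (j : ℝ) / N..((j : ℝ) + 1) / N, f t), ← mul_sum]
  congr 1
  simpa using intervalIntegral.sum_integral_adjacent_intervals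
    (a := fun j : ℕ => (j : ℝ) / N) fun j hj =>
      hfi.intervalIntegrable_of_Ico (hmem j hj.le) (hmem (j + 1) hj)

lemma sum_cellAverages (hfi : IntegrableOn f (Set.Ico 0 1)) :
    ∑ i, cellAverages f N i = N * ∫ t in (0 : ℝ)..1, f t := by
  rcases N.eq_zero_or_pos with rfl | hN
  · simp
  · simpa [div_self (Nat.cast_ne_zero.2 hN.ne' : (N : ℝ) ≠ 0)] using
      sum_cellAverages_castLE (N := N) hfi le_rfl

end CellAverages

/-- Dyadic discretization preserves majorization: if `f, g` are decreasing integrable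
functions on `[0,1)` with `∫₀¹ f = ∫₀¹ g` and `∫₀ˢ f ≤ ∫₀ˢ g` for all `s ∈ [0,1)`, then
the vectors of averages of `f` and `g` over the dyadic intervals of level `n` have
decreasing entries and are majorized accordingly. -/
theorem dyadic_discretization_majorization
    (f g : ℝ → ℝ) (hf : AntitoneOn f (Set.Ico 0 1)) (hg : AntitoneOn g (Set.Ico 0 1))
    (hfi : IntegrableOn f (Set.Ico 0 1)) (hgi : IntegrableOn g (Set.Ico 0 1))
    (htot : ∫ t in Set.Ico (0:ℝ) 1, f t = ∫ t in Set.Ico (0:ℝ) 1, g t)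
    (hpart : ∀ s ∈ Set.Ico (0:ℝ) 1, ∫ t in (0:ℝ)..s, f t ≤ ∫ t in (0:ℝ)..s, g t)
    (n : ℕ)
    (α β : Fin (2 ^ n) → ℝ)
    (hα : ∀ i, α i = 2 ^ n * ∫ t in ((i : ℝ) / 2 ^ n)..(((i : ℝ) + 1) / 2 ^ n), f t)
    (hβ : ∀ i, β i = 2 ^ n * ∫ t in ((i : ℝ) / 2 ^ n)..(((i : ℝ) + 1) / 2 ^ n), g t) :
    Antitone α ∧ Antitone β ∧ IsMajorizedBy α β := by
  obtain rfl : α = cellAverages f (2 ^ n) := funext fun i => by simp [hα, cellAverages]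
  obtain rfl : β = cellAverages g (2 ^ n) := funext fun i => by simp [hβ, cellAverages]
  have hunit : ∫ t in (0:ℝ)..1, f t = ∫ t in (0:ℝ)..1, g t := by
    simpa only [intervalIntegral.integral_of_le zero_le_one, integral_Ioc_eq_integral_Ioo,
      ← integral_Ico_eq_integral_Ioo] using htot
  have hprefix : ∀ s ∈ Set.Icc (0:ℝ) 1, ∫ t in (0:ℝ)..s, f t ≤ ∫ t in (0:ℝ)..s, g t :=
    fun s hs => hs.2.lt_or_eq.elim (fun h => hpart s ⟨hs.1, h⟩) fun h => h ▸ hunit.le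
  have hfa := antitone_cellAverages (N := 2 ^ n) hf hfi
  have hga := antitone_cellAverages (N := 2 ^ n) hg hgi
  refine ⟨hfa, hga, isMajorizedBy_of_antitone hfa hga (fun k hk => ?_) ?_⟩
  · rw [sum_cellAverages_castLE hfi hk, sum_cellAverages_castLE hgi hk]
    exact mul_le_mul_of_nonneg_left (hprefix _ ⟨by positivity,
      div_le_one_of_le₀ (by exact_mod_cast hk) (by positivity)⟩) (by positivity)
  · rw [sum_cellAverages hfi, sum_cellAverages hgi, hunit]
end

section
/- Let M be a II₁ factor with trace τ. For self-adjoint a, b ∈ M, the spectral scales satisfy ‖λ_a − λ_b‖_∞ ≤ ‖a − b‖ (operator norm), where the left side is the sup norm on [0,1). -/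
open scoped ComplexOrder

/- We model a II₁ factor abstractly: a unital C*-algebra `A` (with its canonical order)
together with a normalized faithful tracial state `τ` which has trivial center and
projections of every trace in `[0,1]`.  (Normality of `τ` and of the subalgebras is
implicit in the properties we record, e.g. right-continuity of spectral distributions.)
On bounded sets the σ-strong operator topology of a II₁ factor coincides with the
topology of the trace norm `‖x‖₁ = τ(|x|)`; accordingly σ-strong closures of bounded
sets are formalized as `‖·‖₁`-closures. -/

variable {A : Type*} [CStarAlgebra A] [PartialOrder A] [StarOrderedRing A]

/-- A normalized faithful tracial state on a finite von Neumann algebra. -/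
structure IsFiniteTrace (τ : A →ₗ[ℂ] ℂ) : Prop where
  tracial : ∀ x y : A, τ (x * y) = τ (y * x)
  pos : ∀ x : A, 0 ≤ x → 0 ≤ τ x
  faithful : ∀ x : A, 0 ≤ x → τ x = 0 → x = 0
  normalized : τ 1 = 1

/-- The trace of a II₁ factor: a normalized faithful tracial state on an algebra with
trivial center and with projections of every trace `t ∈ [0,1]`. -/
structure IsII1Trace (τ : A →ₗ[ℂ] ℂ) extends IsFiniteTrace τ : Prop where
  factor : ∀ z : A, (∀ x : A, z * x = x * z) → ∃ c : ℂ, z = c • (1 : A)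
  proj : ∀ t ∈ Set.Icc (0:ℝ) 1, ∃ p : A, IsSelfAdjoint p ∧ p * p = p ∧ τ p = (t : ℂ)

/-- `e s` is the spectral projection `p^a(-∞, s]` of the selfadjoint element `a`:
an increasing right-continuous (in trace) family of projections commuting with `a`,
below which `a ≤ s` and above which `a ≥ s`. -/
structure IsSpectralResolution (τ : A →ₗ[ℂ] ℂ) (a : A) (e : ℝ → A) : Prop where
  selfAdjoint : ∀ s, IsSelfAdjoint (e s)
  idem : ∀ s, e s * e s = e s
  mono : Monotone e
  comm : ∀ s, a * e s = e s * a
  below : ∀ s : ℝ, a * e s ≤ (s : ℂ) • e s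
  above : ∀ s : ℝ, (s : ℂ) • ((1 : A) - e s) ≤ a * ((1 : A) - e s)
  bot : ∀ s, s < -‖a‖ → e s = 0
  top : ∀ s, ‖a‖ ≤ s → e s = 1
  rightCont : ∀ s, ContinuousWithinAt (fun u => (τ (e u)).re) (Set.Ici s) s

/-- The spectral scale `λ_a(t) = min {s ∈ ℝ : τ(p^a(s,∞)) ≤ t}`, expressed through the
resolution `e s = p^a(-∞,s]`, so that `τ(p^a(s,∞)) = 1 - τ(e s)`. -/
noncomputable def spectralScale (τ : A →ₗ[ℂ] ℂ) (e : ℝ → A) : ℝ → ℝ :=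
  fun t => sInf {s : ℝ | 1 - (τ (e s)).re ≤ t}

/-- Spectral majorization `a ≺ b`: `τ(a) = τ(b)` and `∫₀ˢ λ_a ≤ ∫₀ˢ λ_b` for `s ∈ [0,1)`. -/
def IsSpecMajorizedBy (τ : A →ₗ[ℂ] ℂ) (a b : A) : Prop :=
  τ a = τ b ∧
    ∃ ea eb : ℝ → A, IsSpectralResolution τ a ea ∧ IsSpectralResolution τ b eb ∧
      ∀ s ∈ Set.Ico (0:ℝ) 1,
        ∫ t in (0:ℝ)..s, spectralScale τ ea t ≤ ∫ t in (0:ℝ)..s, spectralScale τ eb t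

/-- The trace norm `‖x‖₁ = τ(|x|)` (defined via continuous functional calculus). -/
noncomputable def traceNorm (τ : A →ₗ[ℂ] ℂ) (x : A) : ℝ :=
  (τ (cfc (fun r : ℝ => |r|) x)).re

/-- The trace-preserving conditional expectation onto a subalgebra `N`. -/
structure IsCondExp (τ : A →ₗ[ℂ] ℂ) (N : StarSubalgebra ℂ A) (E : A →ₗ[ℂ] A) : Prop where
  mem : ∀ x : A, E x ∈ N
  fix : ∀ x ∈ N, E x = x
  pos : ∀ x : A, 0 ≤ x → 0 ≤ E x
  star_map : ∀ x : A, E (star x) = star (E x)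
  trace : ∀ x : A, τ (E x) = τ x
  bimod : ∀ n ∈ N, ∀ x : A, E (n * x) = n * E x ∧ E (x * n) = E x * n

/-- The unitary orbit `U_M(b) = {u b u* : u unitary}`. -/
def unitaryOrbit (b : A) : Set A := {x | ∃ u ∈ unitary A, x = u * b * star u}

/-- `Ω_N(b)`: the selfadjoint elements of `N` spectrally majorized by `b`. -/
def Omega (τ : A →ₗ[ℂ] ℂ) (N : StarSubalgebra ℂ A) (b : A) : Set A :=
  {a | a ∈ N ∧ IsSelfAdjoint a ∧ IsSpecMajorizedBy τ a b}

/-- The closure of a set in the trace-norm (`‖·‖₁`) topology; for bounded sets this is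
the σ-strong closure. -/
def l1Closure (τ : A →ₗ[ℂ] ℂ) (S : Set A) : Set A :=
  {x | ∀ ε > (0:ℝ), ∃ y ∈ S, traceNorm τ (x - y) < ε}

/-- A diffuse von Neumann subalgebra: one with no minimal projections, i.e. every
nonzero projection strictly dominates a nonzero projection. -/
def IsDiffuse (N : StarSubalgebra ℂ A) : Prop :=
  ∀ p ∈ N, IsSelfAdjoint p → p * p = p → p ≠ 0 →
    ∃ q ∈ N, IsSelfAdjoint q ∧ q * q = q ∧ q * p = q ∧ q ≠ 0 ∧ q ≠ p

/-- An abelian subalgebra. -/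
def IsAbelian (N : StarSubalgebra ℂ A) : Prop := ∀ x ∈ N, ∀ y ∈ N, x * y = y * x

set_option linter.unusedSectionVars false


section WordLemmas
variable {τ : A →ₗ[ℂ] ℂ} {P R : A}

private lemma PR_pow_mul_R (hR : R * R = R) (n : ℕ) :
    (P * R) ^ (n + 1) * R = (P * R) ^ (n + 1) := by
  rw [pow_succ, mul_assoc, mul_assoc, hR]

private lemma P_mul_PR_pow (hP : P * P = P) (n : ℕ) :
    P * (P * R) ^ (n + 1) = (P * R) ^ (n + 1) := by
  rw [pow_succ', ← mul_assoc, ← mul_assoc, hP]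

private lemma PRP_pow (hP : P * P = P) : ∀ n : ℕ,
    (P * R * P) ^ (n + 1) = (P * R) ^ (n + 1) * P := by
  intro n
  induction n with
  | zero => rw [pow_one, pow_one]
  | succ k ih =>
    have h1 : P * (P * R * P) = (P * R) * P := by
      rw [← mul_assoc, ← mul_assoc, hP]
    calc (P * R * P) ^ (k + 2) = (P * R * P) ^ (k + 1) * (P * R * P) := by rw [pow_succ]
      _ = (P * R) ^ (k + 1) * P * (P * R * P) := by rw [ih]
      _ = (P * R) ^ (k + 1) * (P * (P * R * P)) := by rw [mul_assoc]
      _ = (P * R) ^ (k + 1) * ((P * R) * P) := by rw [h1]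
      _ = (P * R) ^ (k + 1) * (P * R) * P := by rw [← mul_assoc]
      _ = (P * R) ^ (k + 2) * P := by rw [← pow_succ]

private lemma trace_PRP_pow (hτtr : ∀ x y : A, τ (x * y) = τ (y * x))
    (hP : P * P = P) (n : ℕ) :
    τ ((P * R * P) ^ (n + 1)) = τ ((P * R) ^ (n + 1)) := by
  rw [PRP_pow hP, hτtr, P_mul_PR_pow hP]

private lemma u_mul_R (hR : R * R = R) : ((1 - P) * (1 - R)) * R = 0 := by
  have h : ((1 - P) * (1 - R)) * R = (1 - P) * (R - R * R) := by noncomm_ring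
  rw [h, hR, sub_self, mul_zero]

private lemma u_pow_mul_R (hR : R * R = R) (n : ℕ) :
    ((1 - P) * (1 - R)) ^ (n + 1) * R = 0 := by
  rw [pow_succ, mul_assoc, u_mul_R hR, mul_zero]

private lemma P_mul_u (hP : P * P = P) : P * ((1 - P) * (1 - R)) = 0 := by
  have h : P * ((1 - P) * (1 - R)) = (P - P * P) * (1 - R) := by noncomm_ring
  rw [h, hP, sub_self, zero_mul]

private lemma P_mul_u_pow (hP : P * P = P) (n : ℕ) :
    P * ((1 - P) * (1 - R)) ^ (n + 1) = 0 := by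
  rw [pow_succ', ← mul_assoc, P_mul_u hP, zero_mul]

private lemma u_mul_v (hP : P * P = P) :
    ((1 - P) * (1 - R)) * (P * R) = (P * R) ^ 2 - R * (P * R) ^ 1 := by
  have h : ((1 - P) * (1 - R)) * (P * R)
      = P * R - P * (P * R) - R * (P * R) + (P * R) * (P * R) := by noncomm_ring
  rw [h]
  have h2 : P * (P * R) = P * R := by rw [← mul_assoc, hP]
  rw [h2]
  have h3 : (P * R) * (P * R) = (P * R) ^ 2 := by rw [sq]
  rw [h3]
  have h4 : R * (P * R) = R * (P * R) ^ 1 := by rw [pow_one]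
  rw [h4]
  abel

private lemma u_pow_mul_v (hP : P * P = P) (hR : R * R = R) : ∀ n : ℕ,
    ((1 - P) * (1 - R)) ^ (n + 1) * (P * R)
      = (P * R) ^ (n + 2) - R * (P * R) ^ (n + 1) := by
  intro n
  induction n with
  | zero =>
    rw [pow_one, u_mul_v hP, pow_one]
  | succ k ih =>
    have e1 : ((1 - P) * (1 - R)) ^ (k + 2) * (P * R)
        = ((1 - P) * (1 - R)) ^ (k + 1) * (((1 - P) * (1 - R)) * (P * R)) := by
      rw [pow_succ, mul_assoc]
    rw [e1, u_mul_v hP]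
    rw [mul_sub]
    have e3 : ((1 - P) * (1 - R)) ^ (k + 1) * (R * (P * R) ^ 1) = 0 := by
      rw [← mul_assoc, u_pow_mul_R hR, zero_mul]
    rw [e3, sub_zero]
    have e4 : ((1 - P) * (1 - R)) ^ (k + 1) * (P * R) ^ 2
        = (((1 - P) * (1 - R)) ^ (k + 1) * (P * R)) * (P * R) := by
      rw [sq, ← mul_assoc]
    rw [e4, ih, sub_mul]
    rw [← pow_succ]
    rw [mul_assoc, ← pow_succ]

private lemma key_ident (hτtr : ∀ x y : A, τ (x * y) = τ (y * x)) (hτ1 : τ 1 = 1)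
    (hP : P * P = P) (hR : R * R = R) : ∀ n : ℕ,
    τ ((P * R) ^ (n + 1)) - τ (((1 - P) * (1 - R)) ^ (n + 1)) = τ P + τ R - 1 := by
  intro n
  induction n with
  | zero =>
    rw [pow_one, pow_one]
    have h : (1 - P) * (1 - R) = 1 - P - R + P * R := by noncomm_ring
    rw [h, map_add, map_sub, map_sub, hτ1]
    ring
  | succ k ih =>
    have hu : τ (((1 - P) * (1 - R)) ^ (k + 2))
        = τ (((1 - P) * (1 - R)) ^ (k + 1)) + τ ((P * R) ^ (k + 2)) - τ ((P * R) ^ (k + 1)) := by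
      have e1 : ((1 - P) * (1 - R)) ^ (k + 2)
          = ((1 - P) * (1 - R)) ^ (k + 1) * ((1 - P) * (1 - R)) := by rw [pow_succ]
      have e2 : ((1 - P) * (1 - R)) ^ (k + 1) * ((1 - P) * (1 - R))
          = ((1 - P) * (1 - R)) ^ (k + 1)
            - ((1 - P) * (1 - R)) ^ (k + 1) * P
            - ((1 - P) * (1 - R)) ^ (k + 1) * R
            + ((1 - P) * (1 - R)) ^ (k + 1) * (P * R) := by noncomm_ring
      rw [e1, e2, u_pow_mul_R hR, u_pow_mul_v hP hR]
      have e3 : τ (((1 - P) * (1 - R)) ^ (k + 1) * P) = 0 := by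
        rw [hτtr, P_mul_u_pow hP, map_zero]
      rw [map_add, map_sub, map_sub, e3, map_zero, map_sub]
      have e4 : τ (R * (P * R) ^ (k + 1)) = τ ((P * R) ^ (k + 1)) := by
        rw [hτtr R ((P * R) ^ (k + 1)), PR_pow_mul_R hR]
      rw [e4]
      ring
    rw [hu]
    linear_combination ih

end WordLemmas

section CoreLemmas
variable {τ : A →ₗ[ℂ] ℂ}

private lemma trace_re_nonneg (hτ : IsII1Trace τ) {x : A} (hx : 0 ≤ x) : 0 ≤ (τ x).re :=
  (Complex.le_def.mp (hτ.pos x hx)).1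

private lemma pow_nonneg_of_nonneg {z : A} (hz : 0 ≤ z) : ∀ n : ℕ, 0 ≤ z ^ n := by
  have hsa : IsSelfAdjoint z := .of_nonneg hz
  intro n
  induction n using Nat.strong_induction_on with
  | _ n ih =>
    match n with
    | 0 => simpa using star_mul_self_nonneg (1 : A)
    | 1 => simpa using hz
    | (k + 2) =>
      have hk := ih k (by omega)
      have h2 : z ^ (k + 2) = star z * z ^ k * z := by
        rw [hsa.star_eq, pow_succ, pow_succ']
      rw [h2]
      exact star_left_conjugate_nonneg hk z

private lemma dist_comparison (hτ : IsII1Trace τ) (a b : A)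
    (ha : IsSelfAdjoint a) (hb : IsSelfAdjoint b)
    (ea eb : ℝ → A) (hea : IsSpectralResolution τ a ea) (heb : IsSpectralResolution τ b eb)
    (s δ : ℝ) (hδ : ‖a - b‖ < δ) :
    (τ (eb s)).re ≤ (τ (ea (s + δ))).re := by
  by_contra hcon
  push_neg at hcon
  set c : ℝ := ‖a - b‖ with hc
  have hc0 : 0 ≤ c := norm_nonneg _
  set p : A := eb s with hpdef
  set q : A := ea (s + δ) with hqdef
  have hp_sa : star p = p := (heb.selfAdjoint s).star_eq
  have hq_sa : star q = q := (hea.selfAdjoint (s + δ)).star_eq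
  have hp_idem : p * p = p := heb.idem s
  have hq_idem : q * q = q := hea.idem (s + δ)
  set p' : A := 1 - p with hp'def
  set q' : A := 1 - q with hq'def
  have hp'_sa : star p' = p' := by rw [hp'def, star_sub, star_one, hp_sa]
  have hq'_sa : star q' = q' := by rw [hq'def, star_sub, star_one, hq_sa]
  have hp'_idem : p' * p' = p' := by
    have h : (1 - p) * (1 - p) = 1 - p - p + p * p := by noncomm_ring
    rw [hp'def, h, hp_idem]; abel
  have hq'_idem : q' * q' = q' := by
    have h : (1 - q) * (1 - q) = 1 - q - q + q * q := by noncomm_ring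
    rw [hq'def, h, hq_idem]; abel
  have hp_pos : 0 ≤ p := by
    have h0 := star_mul_self_nonneg p; rwa [hp_sa, hp_idem] at h0
  have hp'_pos : 0 ≤ p' := by
    have h0 := star_mul_self_nonneg p'; rwa [hp'_sa, hp'_idem] at h0
  set z : A := q' * p * q' with hzdef
  have hz_sa : IsSelfAdjoint z := by
    have : star z = z := by
      rw [hzdef, star_mul, star_mul, hp_sa, hq'_sa, ← mul_assoc]
    exact this
  have hz_pos : 0 ≤ z := by
    have h0 := star_left_conjugate_nonneg hp_pos q'
    rwa [hq'_sa] at h0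
  have hq'z : q' * z = z := by rw [hzdef, ← mul_assoc, ← mul_assoc, hq'_idem]
  have hzq' : z * q' = z := by rw [hzdef, mul_assoc, hq'_idem]
  have hq'zn : ∀ n : ℕ, q' * z ^ (n + 1) = z ^ (n + 1) := by
    intro n; rw [pow_succ', ← mul_assoc, hq'z]
  have hznq' : ∀ n : ℕ, z ^ (n + 1) * q' = z ^ (n + 1) := by
    intro n; rw [pow_succ, mul_assoc, hzq']
  have hTtr : ∀ x y : A, (τ (x * y)).re = (τ (y * x)).re := fun x y => by rw [hτ.tracial]
  have hTnn : ∀ {x : A}, 0 ≤ x → 0 ≤ (τ x).re := fun hx => trace_re_nonneg hτ hx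
  -- τ(z^(n+2)) = τ(z^(n+1) * p)
  have hzp : ∀ n : ℕ, (τ (z ^ (n + 2))).re = (τ (z ^ (n + 1) * p)).re := by
    intro n
    have e1 : z ^ (n + 2) = z ^ (n + 1) * (p * q') := by
      calc z ^ (n + 2) = z ^ (n + 1) * z := by rw [pow_succ]
        _ = z ^ (n + 1) * (q' * (p * q')) := by rw [hzdef, mul_assoc]
        _ = (z ^ (n + 1) * q') * (p * q') := by rw [← mul_assoc]
        _ = z ^ (n + 1) * (p * q') := by rw [hznq']
    rw [e1]
    calc (τ (z ^ (n+1) * (p * q'))).re = (τ ((z ^ (n+1) * p) * q')).re := by rw [← mul_assoc]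
      _ = (τ (q' * (z ^ (n+1) * p))).re := hTtr _ _
      _ = (τ ((q' * z ^ (n+1)) * p)).re := by rw [← mul_assoc]
      _ = (τ (z ^ (n+1) * p)).re := by rw [hq'zn]
  have hdiffp' : ∀ n : ℕ,
      (τ (z ^ (n+1))).re - (τ (z ^ (n+2))).re = (τ (p' * z ^ (n+1) * p')).re := by
    intro n
    rw [hzp n]
    have e2 : (τ (z ^ (n+1))).re - (τ (z ^ (n+1) * p)).re = (τ (z ^ (n+1) * p')).re := by
      rw [hp'def, mul_sub, mul_one, map_sub, Complex.sub_re]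
    rw [e2]
    calc (τ (z ^ (n+1) * p')).re = (τ (z ^ (n+1) * p' * p')).re := by
          rw [mul_assoc, hp'_idem]
      _ = (τ (p' * (z ^ (n+1) * p'))).re := hTtr _ _
      _ = (τ (p' * z ^ (n+1) * p')).re := by rw [← mul_assoc]
  have hdiff_nn : ∀ n : ℕ, 0 ≤ (τ (z ^ (n+1))).re - (τ (z ^ (n+2))).re := by
    intro n
    rw [hdiffp' n]
    have h0 := star_left_conjugate_nonneg (pow_nonneg_of_nonneg hz_pos (n+1)) p'
    rw [hp'_sa] at h0
    exact hTnn h0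
  set θ : ℝ := (τ p).re + (τ q').re - 1 with hθdef
  have hq'tr : (τ q').re = 1 - (τ q).re := by
    rw [hq'def, map_sub, hτ.normalized, Complex.sub_re, Complex.one_re]
  have hθpos : 0 < θ := by rw [hθdef, hq'tr]; linarith
  have hαθ : ∀ n : ℕ, θ ≤ (τ (z ^ (n+1))).re := by
    intro n
    have hk := key_ident (τ := τ) hτ.tracial hτ.normalized hq'_idem hp_idem n
    have h1 : τ (z ^ (n+1)) = τ ((q' * p) ^ (n+1)) := by
      rw [hzdef]
      exact trace_PRP_pow hτ.tracial hq'_idem n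
    have h2 : (1 : A) - q' = q := by rw [hq'def, sub_sub_cancel]
    have h3 : (1 : A) - p = p' := hp'def.symm
    rw [h2, h3] at hk
    have h4 : τ ((q * p') ^ (n+1)) = τ ((q * p' * q) ^ (n+1)) :=
      (trace_PRP_pow hτ.tracial hq_idem n).symm
    have h5 : 0 ≤ (q * p' * q : A) := by
      have h0 := star_left_conjugate_nonneg hp'_pos q; rwa [hq_sa] at h0
    have h6 : 0 ≤ (τ ((q * p') ^ (n+1))).re := by
      rw [h4]; exact hTnn (pow_nonneg_of_nonneg h5 (n+1))
    have h7 := congrArg Complex.re hk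
    simp only [Complex.sub_re, Complex.add_re, Complex.one_re] at h7
    have h1re : (τ (z ^ (n+1))).re = (τ ((q' * p) ^ (n+1))).re := congrArg Complex.re h1
    rw [hθdef]
    linarith
  -- convergence of the antitone sequence
  set f : ℕ → ℝ := fun n => (τ (z ^ (n+1))).re with hfdef
  have hf_anti : Antitone f := antitone_nat_of_succ_le (fun n => by
    have := hdiff_nn n
    simp only [hfdef]
    linarith)
  have hf_bdd : BddBelow (Set.range f) := ⟨θ, by rintro x ⟨n, rfl⟩; exact hαθ n⟩
  have htend := tendsto_atTop_ciInf hf_anti hf_bdd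
  set L : ℝ := ⨅ i, f i with hLdef
  have hmono1 : Filter.Tendsto (fun k : ℕ => 2*k+1) Filter.atTop Filter.atTop := by
    apply Filter.tendsto_atTop_atTop_of_monotone
    · intro x y h; dsimp only; omega
    · intro m; exact ⟨m, by omega⟩
  have hmono2 : Filter.Tendsto (fun k : ℕ => 2*k+2) Filter.atTop Filter.atTop := by
    apply Filter.tendsto_atTop_atTop_of_monotone
    · intro x y h; dsimp only; omega
    · intro m; exact ⟨m, by omega⟩
  have ht1 : Filter.Tendsto (fun n => f (2*n+1)) Filter.atTop (nhds L) :=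
    htend.comp hmono1
  have ht2 : Filter.Tendsto (fun n => f (2*n+2)) Filter.atTop (nhds L) :=
    htend.comp hmono2
  have ht3 : Filter.Tendsto (fun n => f (2*n+1) - f (2*n+2)) Filter.atTop (nhds 0) := by
    have := ht1.sub ht2; rwa [sub_self] at this
  set K : ℝ := ‖b‖ + |s| + 1 with hKdef
  have hK0 : 0 < K := by positivity
  have hδc : 0 < δ - c := by linarith
  set ε : ℝ := (δ - c) * θ / K with hεdef
  have hε0 : 0 < ε := by positivity
  obtain ⟨n, hn⟩ := (ht3.eventually (gt_mem_nhds hε0)).exists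
  -- the approximate intersection element
  set g : A := z ^ (2*n + 2) with hgdef
  set w : A := z ^ (n + 1) with hwdef
  have hw_sa : star w = w := (hz_sa.pow (n+1)).star_eq
  have hg_ww : g = w * w := by
    rw [hgdef, hwdef, ← pow_add]
    congr 1
    omega
  have hTconj : ∀ x : A, (τ (w * x * w)).re = (τ (x * g)).re := by
    intro x
    calc (τ (w * x * w)).re = (τ (w * (x * w))).re := by rw [mul_assoc]
      _ = (τ ((x * w) * w)).re := hTtr _ _
      _ = (τ (x * (w * w))).re := by rw [mul_assoc]
      _ = (τ (x * g)).re := by rw [hg_ww]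
  have hposg : ∀ {x : A}, 0 ≤ x → 0 ≤ (τ (x * g)).re := by
    intro x hx
    have h1 := star_left_conjugate_nonneg hx w
    rw [hw_sa] at h1
    have h2 := hTnn h1
    rwa [hTconj] at h2
  have hmonog : ∀ {x y : A}, x ≤ y → (τ (x * g)).re ≤ (τ (y * g)).re := by
    intro x y hxy
    have h1 := hposg (sub_nonneg.mpr hxy)
    rw [sub_mul, map_sub, Complex.sub_re] at h1
    linarith
  have hq'g : q' * g = g := hq'zn (2*n+1)
  -- E1
  have hE1 : (s + δ) * (τ g).re ≤ (τ (a * g)).re := by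
    have h0 : 0 ≤ a * q' - ((s + δ : ℝ) : ℂ) • q' := by
      rw [sub_nonneg, hq'def]
      exact hea.above (s + δ)
    have h1 := hposg h0
    have h2 : (a * q' - ((s + δ : ℝ) : ℂ) • q') * g
        = a * g - ((s + δ : ℝ) : ℂ) • g := by
      rw [sub_mul, smul_mul_assoc, mul_assoc, hq'g]
    rw [h2, map_sub, map_smul] at h1
    simp only [Complex.sub_re, smul_eq_mul, Complex.mul_re, Complex.ofReal_re,
      Complex.ofReal_im, zero_mul, sub_zero] at h1
    linarith
  -- E2
  have hE2 : (τ (a * g)).re ≤ (τ (b * g)).re + c * (τ g).re := by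
    have hab : a - b ≤ algebraMap ℝ A c := (ha.sub hb).le_algebraMap_norm_self
    have halg : algebraMap ℝ A c = (c : ℂ) • (1 : A) := by
      rw [IsScalarTower.algebraMap_apply ℝ ℂ A, Algebra.algebraMap_eq_smul_one]; norm_num
    have h0 : 0 ≤ ((c : ℂ) • (1 : A) + b) - a := by
      have h := sub_nonneg.mpr hab
      rw [halg] at h
      have he : (c : ℂ) • (1 : A) - (a - b) = ((c : ℂ) • (1 : A) + b) - a := by abel
      rwa [he] at h
    have h1 := hposg h0
    have h2 : (((c : ℂ) • (1 : A) + b) - a) * g = (c : ℂ) • g + b * g - a * g := by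
      rw [sub_mul, add_mul, smul_mul_assoc, one_mul]
    rw [h2, map_sub, map_add, map_smul] at h1
    simp only [Complex.sub_re, Complex.add_re, smul_eq_mul, Complex.mul_re,
      Complex.ofReal_re, Complex.ofReal_im, zero_mul, sub_zero] at h1
    linarith
  -- E3
  have hDg_def : (τ (g * p')).re = (τ g).re - (τ (g * p)).re := by
    rw [hp'def, mul_sub, mul_one, map_sub, Complex.sub_re]
  have hgp_eq : (τ (g * p)).re = f (2*n+2) := (hzp (2*n+1)).symm
  have hgval : (τ g).re = f (2*n+1) := rfl
  have hDg_nn : 0 ≤ (τ g).re - (τ (g * p)).re := by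
    rw [hgval, hgp_eq]
    exact hdiff_nn (2*n+1)
  have hE3 : (τ (b * g)).re ≤ s * (τ g).re + (‖b‖ + |s|) * ((τ g).re - (τ (g * p)).re) := by
    have hcomm : b * p = p * b := heb.comm s
    have hcomm' : b * p' = p' * b := by
      rw [hp'def, mul_sub, sub_mul, mul_one, one_mul, hcomm]
    have hsplit : b * g = (b * p) * g + (b * p') * g := by
      rw [← add_mul, ← mul_add]
      have : p + p' = 1 := by rw [hp'def]; abel
      rw [this, mul_one]
    have hterm1 : (τ ((b * p) * g)).re ≤ s * (τ (g * p)).re := by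
      have h1 := hmonog (heb.below s : b * p ≤ (s : ℂ) • p)
      have h2 : ((s : ℂ) • p) * g = (s : ℂ) • (p * g) := by rw [smul_mul_assoc]
      rw [h2, map_smul] at h1
      simp only [smul_eq_mul, Complex.mul_re, Complex.ofReal_re, Complex.ofReal_im,
        zero_mul, sub_zero] at h1
      calc (τ ((b * p) * g)).re ≤ s * (τ (p * g)).re := h1
        _ = s * (τ (g * p)).re := by rw [hTtr p g]
    have hterm2 : (τ ((b * p') * g)).re ≤ ‖b‖ * ((τ g).re - (τ (g * p)).re) := by
      have hbp' : b * p' ≤ (‖b‖ : ℂ) • p' := by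
        have h1 : b * p' = p' * b * p' := by
          calc b * p' = p' * b := hcomm'
            _ = (p' * p') * b := by rw [hp'_idem]
            _ = p' * (p' * b) := by rw [mul_assoc]
            _ = p' * (b * p') := by rw [hcomm']
            _ = p' * b * p' := by rw [← mul_assoc]
        have h2 : b ≤ algebraMap ℝ A ‖b‖ := hb.le_algebraMap_norm_self
        have h3 := star_left_conjugate_le_conjugate h2 p'
        rw [hp'_sa] at h3
        have halg : algebraMap ℝ A ‖b‖ = (‖b‖ : ℂ) • (1 : A) := by
          rw [IsScalarTower.algebraMap_apply ℝ ℂ A, Algebra.algebraMap_eq_smul_one]; norm_num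
        have h4 : p' * algebraMap ℝ A ‖b‖ * p' = (‖b‖ : ℂ) • p' := by
          rw [halg, mul_smul_comm, mul_one, smul_mul_assoc, hp'_idem]
        calc b * p' = p' * b * p' := h1
          _ ≤ p' * algebraMap ℝ A ‖b‖ * p' := h3
          _ = (‖b‖ : ℂ) • p' := h4
      have h1 := hmonog hbp'
      have h2 : ((‖b‖ : ℂ) • p') * g = (‖b‖ : ℂ) • (p' * g) := by rw [smul_mul_assoc]
      rw [h2, map_smul] at h1
      simp only [smul_eq_mul, Complex.mul_re, Complex.ofReal_re, Complex.ofReal_im,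
        zero_mul, sub_zero] at h1
      calc (τ ((b * p') * g)).re ≤ ‖b‖ * (τ (p' * g)).re := h1
        _ = ‖b‖ * (τ (g * p')).re := by rw [hTtr p' g]
        _ = ‖b‖ * ((τ g).re - (τ (g * p)).re) := by rw [hDg_def]
    have hsum : (τ (b * g)).re = (τ ((b * p) * g)).re + (τ ((b * p') * g)).re := by
      rw [hsplit, map_add, Complex.add_re]
    have habs1 : (-s) * ((τ g).re - (τ (g * p)).re) ≤ |s| * ((τ g).re - (τ (g * p)).re) :=
      mul_le_mul_of_nonneg_right (neg_le_abs s) hDg_nn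
    have e1 : s * (τ (g * p)).re
        = s * (τ g).re + (-s) * ((τ g).re - (τ (g * p)).re) - 0 := by ring
    have e2 : (‖b‖ + |s|) * ((τ g).re - (τ (g * p)).re)
        = ‖b‖ * ((τ g).re - (τ (g * p)).re) + |s| * ((τ g).re - (τ (g * p)).re) := by ring
    linarith [hterm1, hterm2, hsum, habs1, e1, e2]
  -- final contradiction
  have hθg : θ ≤ (τ g).re := hαθ (2*n+1)
  have hmain : (δ - c) * (τ g).re ≤ (‖b‖ + |s|) * ((τ g).re - (τ (g * p)).re) := by
    have e1 : (s + δ) * (τ g).re = s * (τ g).re + δ * (τ g).re := by ring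
    have e2 : (δ - c) * (τ g).re = δ * (τ g).re - c * (τ g).re := by ring
    linarith [hE1, hE2, hE3, e1, e2]
  have hDlt : (τ g).re - (τ (g * p)).re < ε := by
    rw [hgval, hgp_eq]; exact hn
  have hfin1 : (δ - c) * θ ≤ (δ - c) * (τ g).re :=
    mul_le_mul_of_nonneg_left hθg hδc.le
  have hfin2 : (‖b‖ + |s|) * ((τ g).re - (τ (g * p)).re) ≤ (‖b‖ + |s|) * ε := by
    apply mul_le_mul_of_nonneg_left hDlt.le
    positivity
  have hfin3 : (‖b‖ + |s|) * ε < K * ε := by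
    apply mul_lt_mul_of_pos_right _ hε0
    rw [hKdef]; linarith
  have hfin4 : K * ε = (δ - c) * θ := by
    rw [hεdef, mul_div_cancel₀]
    exact hK0.ne'
  linarith

end CoreLemmas

private lemma scale_le (hτ : IsII1Trace τ) (a b : A)
    (ha : IsSelfAdjoint a) (hb : IsSelfAdjoint b)
    (ea eb : ℝ → A) (hea : IsSpectralResolution τ a ea) (heb : IsSpectralResolution τ b eb)
    (t : ℝ) (ht0 : 0 ≤ t) (ht1 : t < 1) (δ : ℝ) (hδ : ‖a - b‖ < δ) :
    spectralScale τ ea t ≤ spectralScale τ eb t + δ := by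
  have hSa_bdd : BddBelow {s : ℝ | 1 - (τ (ea s)).re ≤ t} := by
    refine ⟨-‖a‖, fun s hs => ?_⟩
    by_contra hlt
    push_neg at hlt
    have h0 := hea.bot s hlt
    simp only [Set.mem_setOf_eq, h0, map_zero, Complex.zero_re, sub_zero] at hs
    linarith
  have hSb_ne : Set.Nonempty {s : ℝ | 1 - (τ (eb s)).re ≤ t} := by
    refine ⟨‖b‖, ?_⟩
    simp only [Set.mem_setOf_eq, heb.top ‖b‖ le_rfl, hτ.normalized, Complex.one_re]
    linarith
  have hkey : ∀ s ∈ {s : ℝ | 1 - (τ (eb s)).re ≤ t},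
      s + δ ∈ {s : ℝ | 1 - (τ (ea s)).re ≤ t} := by
    intro s hs
    have hcmp := dist_comparison hτ a b ha hb ea eb hea heb s δ hδ
    simp only [Set.mem_setOf_eq] at hs ⊢
    linarith
  have h2 : spectralScale τ ea t - δ ≤ spectralScale τ eb t := by
    show spectralScale τ ea t - δ ≤ sInf {s : ℝ | 1 - (τ (eb s)).re ≤ t}
    apply le_csInf hSb_ne
    intro s hs
    have h3 : spectralScale τ ea t ≤ s + δ := csInf_le hSa_bdd (hkey s hs)
    linarith
  linarith

/-- Petz's estimate: spectral scales are Lipschitz with respect to the operator norm: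
`‖λ_a − λ_b‖_∞ ≤ ‖a − b‖`. -/
theorem spectralScale_sup_norm_estimate
    (τ : A →ₗ[ℂ] ℂ) (hτ : IsII1Trace τ) (a b : A)
    (ha : IsSelfAdjoint a) (hb : IsSelfAdjoint b)
    (ea eb : ℝ → A) (hea : IsSpectralResolution τ a ea) (heb : IsSpectralResolution τ b eb) :
    ∀ t ∈ Set.Ico (0:ℝ) 1, |spectralScale τ ea t - spectralScale τ eb t| ≤ ‖a - b‖ := by
  intro t ht
  rw [Set.mem_Ico] at ht
  obtain ⟨ht0, ht1⟩ := ht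
  rw [abs_sub_le_iff]
  constructor
  · apply le_of_forall_pos_le_add
    intro ε hε
    have h := scale_le hτ a b ha hb ea eb hea heb t ht0 ht1 (‖a - b‖ + ε) (by linarith)
    linarith
  · apply le_of_forall_pos_le_add
    intro ε hε
    have h := scale_le hτ b a hb ha eb ea heb hea t ht0 ht1 (‖b - a‖ + ε)
      (by rw [norm_sub_rev]; linarith)
    rw [norm_sub_rev] at h
    linarith
end

section
/- Let M be a II₁ factor, N ⊂ M a von Neumann subalgebra with trace-preserving conditional expectation E_N, and {p_i}_{i=1}^n ⊂ Z(N) mutually orthogonal projections, equivalent in M, with ∑ p_i = 1. Then there exists a unital *-monomorphism π : Mₙ(ℂ) → M with π(e_{ii}) = p_i for all i and E_N(π(A)) = π(E_𝒟(A)) for all A ∈ Mₙ(ℂ), where E_𝒟 is the projection onto the diagonal. -/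
open scoped ComplexOrder

/- We model a II₁ factor abstractly: a unital C*-algebra `A` (with its canonical order)
together with a normalized faithful tracial state `τ` which has trivial center and
projections of every trace in `[0,1]`.  (Normality of `τ` and of the subalgebras is
implicit in the properties we record, e.g. right-continuity of spectral distributions.)
On bounded sets the σ-strong operator topology of a II₁ factor coincides with the
topology of the trace norm `‖x‖₁ = τ(|x|)`; accordingly σ-strong closures of bounded
sets are formalized as `‖·‖₁`-closures. -/

variable {A : Type*} [CStarAlgebra A] [PartialOrder A] [StarOrderedRing A]

/-!
If `v_i` are partial isometries with `v_i v_i* = p_i` and common source `v_i* v_i = p_0`, then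
`e_ij = v_i v_j*` is a system of matrix units with `e_ii = p_i`, giving a unital *-homomorphism
`Mₙ(ℂ) → M`, injective because `Mₙ(ℂ)` is simple. Since `e_ij = p_i e_ij p_j` and the `p_i` are
central in `N`, the bimodule property gives `E_N(e_ij) = p_i E_N(e_ij) p_j = E_N(e_ij) p_i p_j`,
which vanishes for `i ≠ j`; hence `E_N` acts on the image of `Mₙ(ℂ)` as `E_𝒟`.
-/

open Matrix

theorem mul_star_mul_self_eq_of_isIdempotentElem {R : Type*} [NormedRing R] [StarRing R]
    [CStarRing R] {v : R} (hv : IsIdempotentElem (star v * v)) : v * (star v * v) = v := by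
  have : star (v * (1 - star v * v)) * (v * (1 - star v * v)) = 0 := by
    calc _ = (1 - star v * v) * (star v * v) * (1 - star v * v) := by
          simp only [star_mul, star_sub, star_one, star_star, mul_assoc]
      _ = 0 := by rw [hv.one_sub_mul_self, zero_mul]
  rw [CStarRing.star_mul_self_eq_zero_iff, mul_sub, mul_one, sub_eq_zero] at this
  exact this.symm

structure IsMatrixUnits {ι R : Type*} [Fintype ι] [DecidableEq ι] [Semiring R] [Star R]
    (e : ι → ι → R) : Prop where
  mul_eq : ∀ i j k l, e i j * e k l = if j = k then e i l else 0
  star_eq : ∀ i j, star (e i j) = e j i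
  sum_diag : ∑ i, e i i = 1

namespace IsMatrixUnits

variable {ι K R : Type*} [Fintype ι] [DecidableEq ι] [CommSemiring K] [StarRing K]
  [Semiring R] [StarRing R] [Algebra K R] [StarModule K R] {e : ι → ι → R}

theorem diag_mul_mul_diag (he : IsMatrixUnits e) (i j : ι) : e i i * e i j * e j j = e i j := by
  simp only [he.mul_eq, if_true]

variable (K) in
def toStarAlgHom (he : IsMatrixUnits e) : Matrix ι ι K →⋆ₐ[K] R where
  toAlgHom := AlgHom.ofLinearMap
    { toFun B := ∑ i, ∑ j, B i j • e i j
      map_add' B C := by simp only [Matrix.add_apply, add_smul, Finset.sum_add_distrib]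
      map_smul' c B := by
        simp only [Matrix.smul_apply, smul_assoc, Finset.smul_sum, RingHom.id_apply] }
    (by
      simp only [LinearMap.coe_mk, AddHom.coe_mk, one_apply, ite_smul, one_smul, zero_smul,
        Finset.sum_ite_eq, Finset.mem_univ, if_true, he.sum_diag])
    (fun B C => by
      simp only [LinearMap.coe_mk, AddHom.coe_mk, Finset.sum_mul, Finset.mul_sum,
        smul_mul_smul_comm, he.mul_eq, smul_ite, smul_zero, Finset.sum_ite_eq', Finset.mem_univ,
        if_true, mul_apply, Finset.sum_smul]
      exact (Finset.sum_comm.trans (Finset.sum_congr rfl fun _ _ => Finset.sum_comm)).trans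
        Finset.sum_comm)
  map_star' B := by
    change ∑ i, ∑ j, (star B) i j • e i j = star (∑ i, ∑ j, B i j • e i j)
    simp only [star_sum, star_smul, he.star_eq, star_apply]
    exact Finset.sum_comm

theorem toStarAlgHom_apply (he : IsMatrixUnits e) (B : Matrix ι ι K) :
    he.toStarAlgHom K B = ∑ i, ∑ j, B i j • e i j :=
  rfl

theorem toStarAlgHom_single (he : IsMatrixUnits e) (i j : ι) :
    he.toStarAlgHom K (single i j 1) = e i j := by
  simp [toStarAlgHom_apply, single_apply, ite_smul, ite_and]

theorem map_toStarAlgHom_eq_diagonal (he : IsMatrixUnits e) (E : R →ₗ[K] R)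
    (hdiag : ∀ i, E (e i i) = e i i) (hoff : ∀ i j, i ≠ j → E (e i j) = 0) (B : Matrix ι ι K) :
    E (he.toStarAlgHom K B) = he.toStarAlgHom K (diagonal B.diag) := by
  simp only [toStarAlgHom_apply, map_sum, map_smul, diagonal_apply, ite_smul, zero_smul]
  refine Finset.sum_congr rfl fun i _ => ?_
  rw [Finset.sum_eq_single i (fun j _ hji => by rw [hoff i j hji.symm, smul_zero]) (by simp)]
  simp [hdiag]

end IsMatrixUnits

theorem isMatrixUnits_mul_star {ι R : Type*} [Fintype ι] [DecidableEq ι] [NormedRing R]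
    [StarRing R] [CStarRing R] {w : ι → R} {q : R} (hq : IsIdempotentElem q)
    (hw : ∀ i, star (w i) * w i = q)
    (horth : ∀ i j, i ≠ j → w i * star (w i) * (w j * star (w j)) = 0)
    (hsum : ∑ i, w i * star (w i) = 1) :
    IsMatrixUnits fun i j => w i * star (w j) := by
  have hwq : ∀ i, w i * q = w i := fun i =>
    hw i ▸ mul_star_mul_self_eq_of_isIdempotentElem (hw i ▸ hq)
  have hqw : ∀ i, q * star (w i) = star (w i) := fun i => by
    have h := congrArg star (hwq i)
    rwa [star_mul, ← hw i, star_mul, star_star, hw i] at h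
  have hkey : ∀ j k, star (w j) * w k = if j = k then q else 0 := by
    intro j k
    split_ifs with hjk
    · exact hjk ▸ hw j
    · calc star (w j) * w k = star (w j) * w j * star (w j) * (w k * star (w k) * w k) := by
            rw [hw, hqw, mul_assoc (w k), hw, hwq]
        _ = star (w j) * (w j * star (w j) * (w k * star (w k))) * w k := by noncomm_ring
        _ = 0 := by rw [horth j k hjk, mul_zero, zero_mul]
  refine ⟨fun i j k l => ?_, fun i j => by rw [star_mul, star_star], hsum⟩
  calc w i * star (w j) * (w k * star (w l)) = w i * (star (w j) * w k) * star (w l) := by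
        simp only [mul_assoc]
    _ = _ := by rw [hkey]; split_ifs <;> simp only [hwq, mul_zero, zero_mul]

theorem IsCondExp.map_mul_mul_eq_zero {M : Type*} [CStarAlgebra M] [PartialOrder M]
    {τ : M →ₗ[ℂ] ℂ} {N : StarSubalgebra ℂ M} {E : M →ₗ[ℂ] M} (hE : IsCondExp τ N E) {p q : M}
    (hp : p ∈ N) (hq : q ∈ N) (hp_central : ∀ x ∈ N, p * x = x * p) (hpq : p * q = 0) (x : M) :
    E (p * x * q) = 0 := by
  rw [(hE.bimod q hq _).2, (hE.bimod p hp x).1, hp_central _ (hE.mem x), mul_assoc, hpq, mul_zero]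

/-- Matrix-unit embedding compatible with the conditional expectation: given mutually
orthogonal, `M`-equivalent central projections `p₁,…,pₙ` of `N` summing to `1`, there is
a unital *-monomorphism `π : Mₙ(ℂ) → M` with `π(eᵢᵢ) = pᵢ` and `E_N ∘ π = π ∘ E_𝒟`. -/
theorem exists_matrix_embedding_condExp
    (τ : A →ₗ[ℂ] ℂ) (hτ : IsII1Trace τ) (N : StarSubalgebra ℂ A)
    (E : A →ₗ[ℂ] A) (hE : IsCondExp τ N E) (n : ℕ) (p : Fin n → A)
    (hmem : ∀ i, p i ∈ N)
    (hcentral : ∀ i, ∀ x ∈ N, p i * x = x * p i)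
    (hproj : ∀ i, IsSelfAdjoint (p i) ∧ p i * p i = p i)
    (horth : ∀ i j, i ≠ j → p i * p j = 0)
    (hequiv : ∀ i j, ∃ v : A, v * star v = p i ∧ star v * v = p j)
    (hsum : ∑ i, p i = 1) :
    ∃ π : Matrix (Fin n) (Fin n) ℂ →⋆ₐ[ℂ] A,
      Function.Injective π ∧
      (∀ i, π (Matrix.single i i 1) = p i) ∧
      ∀ B : Matrix (Fin n) (Fin n) ℂ, E (π B) = π (Matrix.diagonal B.diag) := by
  have : Nontrivial A := nontrivial_of_ne 1 0 fun h => by simpa [h] using hτ.normalized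
  have : NeZero n := ⟨fun h0 => by subst h0; simp at hsum⟩
  choose w hwp hwq using fun i => hequiv i 0
  have he : IsMatrixUnits fun i j => w i * star (w j) :=
    isMatrixUnits_mul_star (hproj 0).2 hwq (fun i j hij => by rw [hwp, hwp, horth i j hij])
      (by simpa only [hwp] using hsum)
  have hdiag : ∀ i, E (w i * star (w i)) = w i * star (w i) := fun i => by
    rw [hwp]; exact hE.fix _ (hmem i)
  have hoff : ∀ i j, i ≠ j → E (w i * star (w j)) = 0 := fun i j hij => by
    have h := he.diag_mul_mul_diag i j
    simp only [hwp] at h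
    rw [← h]
    exact hE.map_mul_mul_eq_zero (hmem i) (hmem j) (hcentral i) (horth i j hij) _
  exact ⟨he.toStarAlgHom ℂ, (he.toStarAlgHom ℂ : Matrix (Fin n) (Fin n) ℂ →+* A).injective,
    fun i => by rw [he.toStarAlgHom_single, hwp], he.map_toStarAlgHom_eq_diagonal E hdiag hoff⟩
end
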